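/- arXiv:2310.19890 — 8 statements merged into one kernel-verified Lean document; each statement's English description precedes it below -/
import Mathlib

section
/- Let M be a matroid on a finite ground set E and let A = {χ_B : B a base of M} ⊆ ℤ^E be the set of indicator vectors of its bases. Then A is normal: every element of the subgroup of (ℤ^E,+) generated by A whose image in ℝ^E lies in the convex cone of nonnegative real combinations of A already belongs to the additive submonoid generated by A. -/
/-!
On the cone spanned by the base indicators, `r(E) · z(X) ≤ r(X) · z(E)` for every `X`, because a
base meets `X` in at most `r(X)` elements. Summing coordinates in the group condition makes `z(E)`
an integral multiple `n · r(E)`, so `z ≥ 0` satisfies `z(X) ≤ n · r(X)` and `z(E) = n · r(E)`. It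
remains to write such a `z` as a sum of `n` base indicators (Edmonds' base packing theorem).

Grow `n` independent sets covering each `e` at most `z e` times. A deficit at `e₀` is repaired along
a shortest path in the exchange graph from `e₀` to an element that can be inserted into one of the
sets; shortestness makes the exchanges along the path triangular, hence simultaneously valid. If no
such path exists, every set meets the reachable elements in a basis of them, so the deficit
contradicts the rank bound for that set.
-/

open Set Function

namespace Relation.ReflTransGen

variable {α : Type*} {r : α → α → Prop} {a b : α}

lemma exists_seq (h : ReflTransGen r a b) :
    ∃ (n : ℕ) (u : ℕ → α), u 0 = a ∧ (∀ i < n, r (u i) (u (i + 1))) ∧ u n = b := by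
  induction h with
  | refl => exact ⟨0, fun _ ↦ a, rfl, by omega, rfl⟩
  | @tail c d _ hcd ih =>
    obtain ⟨n, u, hu0, hchain, rfl⟩ := ih
    refine ⟨n + 1, fun m ↦ if m ≤ n then u m else d, by simp [hu0], fun i hi ↦ ?_, by simp⟩
    obtain hi | rfl := Nat.lt_succ_iff_lt_or_eq.1 hi
    · simpa [hi.le, Nat.succ_le_of_lt hi] using hchain i hi
    · simpa using hcd

lemma exists_shortest {P : α → Prop} (h : ReflTransGen r a b) (hb : P b) :
    ∃ (n : ℕ) (u : ℕ → α), u 0 = a ∧ (∀ i < n, r (u i) (u (i + 1))) ∧ P (u n) ∧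
      InjOn u (Iic n) ∧ ∀ i l, i + 1 < l → l ≤ n → ¬ r (u i) (u l) := by
  classical
  have hex : ∃ n, ∃ u : ℕ → α, u 0 = a ∧ (∀ i < n, r (u i) (u (i + 1))) ∧ P (u n) := by
    obtain ⟨n, u, hu0, hchain, rfl⟩ := h.exists_seq
    exact ⟨n, u, hu0, hchain, hb⟩
  obtain ⟨u, hu0, hchain, hP⟩ := Nat.find_spec hex
  set n := Nat.find hex
  have hnotP : ∀ i < n, ¬ P (u i) := fun i hi hPi ↦
    Nat.find_min hex hi ⟨u, hu0, fun l hl ↦ hchain l (by omega), hPi⟩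
  have hshort : ∀ i l, i + 1 < l → l ≤ n → ¬ r (u i) (u l) := by
    intro i l hil hln hr
    -- splice out `u (i + 1), …, u (l - 1)`
    refine Nat.find_min hex (m := n - (l - i - 1)) (by omega)
      ⟨fun m ↦ if m ≤ i then u m else u (m + (l - i - 1)), by simp [hu0], fun m hm ↦ ?_, ?_⟩
    · obtain hmi | rfl | hmi := lt_trichotomy m i
      · simpa [hmi.le, Nat.succ_le_of_lt hmi] using hchain m (by omega)
      · simpa [show m + 1 + (l - m - 1) = l by omega] using hr
      · simpa [show ¬ m ≤ i by omega, show ¬ m + 1 ≤ i by omega,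
          show m + 1 + (l - i - 1) = m + (l - i - 1) + 1 by omega] using hchain _ (by omega)
    · simpa [show ¬ n - (l - i - 1) ≤ i by omega, show n - (l - i - 1) + (l - i - 1) = n by omega]
        using hP
  have hne : ∀ i l, i < l → l ≤ n → u i ≠ u l := by
    intro i l hil hln heq
    obtain hln | rfl := hln.lt_or_eq
    · exact hshort i (l + 1) (by omega) hln (heq ▸ hchain l hln)
    · exact hnotP i hil (heq ▸ hP)
  refine ⟨n, u, hu0, hchain, hP, fun i hi l hl heq ↦ ?_, hshort⟩
  by_contra hil
  obtain h | h := lt_or_gt_of_ne hil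
  · exact hne i l h hl heq
  · exact hne l i h hi heq.symm

end Relation.ReflTransGen

section Indicator

variable {α β : Type*} [DecidableEq α]

lemma indicator_image_eq_sum_single {Q : Finset β} {x : β → α} (hx : InjOn x Q) :
    (x '' Q).indicator (1 : α → ℤ) = ∑ i ∈ Q, Pi.single (x i) 1 := by
  classical
  induction Q using Finset.induction_on with
  | empty => ext; simp
  | insert a Q ha ih =>
    have hxa : x a ∉ x '' Q := fun ⟨i, hi, hia⟩ ↦
      ha (hx (Finset.mem_coe.2 (Finset.mem_insert_of_mem hi))
        (Finset.mem_coe.2 (Finset.mem_insert_self a Q)) hia ▸ hi)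
    rw [Finset.coe_insert, image_insert_eq, insert_eq, Finset.sum_insert ha,
      indicator_union_of_disjoint (disjoint_singleton_left.2 hxa), indicator_singleton,
      ← ih (hx.mono (by simp))]
    rfl

lemma indicator_sdiff_union_image {A : Set α} {Q : Finset β} {x y : β → α}
    (hx : ∀ i ∈ Q, x i ∉ A) (hy : ∀ i ∈ Q, y i ∈ A) (hxinj : InjOn x Q) (hyinj : InjOn y Q) :
    ((A \ y '' Q) ∪ x '' Q).indicator (1 : α → ℤ) =
      A.indicator 1 + ∑ i ∈ Q, (Pi.single (x i) 1 - Pi.single (y i) 1) := by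
  rw [Finset.sum_sub_distrib, ← indicator_image_eq_sum_single hxinj,
    ← indicator_image_eq_sum_single hyinj]
  classical
  have hxA : ∀ v ∈ x '' Q, v ∉ A := by rintro _ ⟨i, hi, rfl⟩; exact hx i hi
  have hyA : ∀ v ∈ y '' Q, v ∈ A := by rintro _ ⟨i, hi, rfl⟩; exact hy i hi
  ext v
  simp only [Pi.add_apply, Pi.sub_apply, indicator_apply, mem_union, mem_sdiff, Pi.one_apply]
  split_ifs <;> grind

end Indicator

noncomputable def coverCount {α ι : Type*} [Fintype ι] (F : ι → Set α) : α → ℤ :=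
  ∑ j, (F j).indicator 1

lemma Finset.sum_indicator_one_eq_ncard {α : Type*} (S : Set α) (X : Finset α) :
    ∑ e ∈ X, S.indicator (1 : α → ℤ) e = (S ∩ X).ncard := by
  classical
  simp only [indicator_apply, Pi.one_apply, Finset.sum_boole]
  rw [← ncard_coe_finset, Finset.coe_filter]
  congr 2
  ext; simp [and_comm]

lemma AddMonoidHom.mem_zmultiples_of_mem_closure {G H : Type*} [AddGroup G] [AddGroup H]
    (φ : G →+ H) {A : Set G} {r : H} (hA : ∀ a ∈ A, φ a = r) {z : G}
    (hz : z ∈ AddSubgroup.closure A) : φ z ∈ AddSubgroup.zmultiples r := by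
  rw [AddSubgroup.zmultiples_eq_closure]
  refine AddSubgroup.closure_mono (h := φ '' A) (by rintro _ ⟨a, ha, rfl⟩; exact hA a ha) ?_
  rw [← AddMonoidHom.map_closure]
  exact AddSubgroup.mem_map_of_mem φ hz

lemma LinearMap.nonneg_of_mem_span_nnreal {V : Type*} [AddCommGroup V] [Module ℝ V]
    (ℓ : V →ₗ[ℝ] ℝ) {S : Set V} (hS : ∀ s ∈ S, 0 ≤ ℓ s) {v : V}
    (hv : v ∈ Submodule.span NNReal S) : 0 ≤ ℓ v := by
  induction hv using Submodule.span_induction with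
  | mem s hs => exact hS s hs
  | zero => simp
  | add x y _ _ hx hy => rw [map_add]; exact add_nonneg hx hy
  | smul t x _ hx => rw [NNReal.smul_def, map_smul, smul_eq_mul]; exact mul_nonneg t.2 hx

namespace Matroid

variable {α : Type*} {M : Matroid α} {I J S U X : Set α} {e f : α}

lemma IsBasis'.ncard_eq_ncard (hI : M.IsBasis' I X) (hJ : M.IsBasis' J X) : I.ncard = J.ncard := by
  rw [ncard_def, ncard_def, hI.encard_eq_encard hJ]

lemma Indep.ncard_le_of_isBasis' [M.RankFinite] (hJ : M.Indep J) (hJX : J ⊆ X)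
    (hI : M.IsBasis' I X) : J.ncard ≤ I.ncard := by
  rw [ncard_def, ncard_def]
  exact ENat.toNat_le_toNat (hI.encard_eq_eRk ▸ hJ.encard_le_eRk_of_subset hJX)
    hI.indep.finite.encard_lt_top.ne

lemma Indep.indep_of_subset_closure (hI : M.Indep I) (hIfin : I.Finite)
    (hIS : I ⊆ M.closure S) (hSE : S ⊆ M.E) (hcard : S.encard ≤ I.encard) : M.Indep S := by
  have hfin : (I ∪ S).Finite :=
    hIfin.union (finite_of_encard_le_coe (hcard.trans_eq hIfin.cast_ncard_eq.symm))
  refine (IsRkFinite.isBasis_of_subset_closure_of_subset_of_encard_le (M.isRkFinite_of_finite hfin)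
    (union_subset hIS (M.subset_closure S)) subset_union_right ?_).indep
  calc S.encard ≤ I.encard := hcard
    _ = M.eRk I := hI.eRk_eq_encard.symm
    _ ≤ M.eRk (I ∪ S) := M.eRk_mono subset_union_left

lemma Indep.fundCircuit_eq_of_subset (hJ : M.Indep J) (hIJ : I ⊆ J) (he : e ∈ M.closure I)
    (heJ : e ∉ J) : M.fundCircuit e J = M.fundCircuit e I :=
  (((hJ.subset hIJ).fundCircuit_isCircuit he (notMem_subset hIJ heJ)).eq_fundCircuit_of_subset hJ
    ((M.fundCircuit_subset_insert e I).trans (insert_subset_insert hIJ))).symm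

/-- `f ∈ I` may be exchanged for `e ∉ I`: `insert e I \ {f}` is independent when `I` is. -/
def ExchangeArc (M : Matroid α) (I : Set α) (e f : α) : Prop :=
  e ∈ M.closure I \ I ∧ f ∈ M.fundCircuit e I ∩ I

lemma ExchangeArc.mono (h : M.ExchangeArc I e f) (hJ : M.Indep J) (hIJ : I ⊆ J) (heJ : e ∉ J) :
    M.ExchangeArc J e f := by
  refine ⟨⟨M.closure_subset_closure hIJ h.1.1, heJ⟩, ?_⟩
  rw [hJ.fundCircuit_eq_of_subset hIJ h.1.1 heJ]
  exact ⟨h.2.1, hIJ h.2.2⟩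

section Triangular

variable {Q : Finset ℕ} {x y : ℕ → α}

lemma Indep.subset_closure_of_triangular (hI : M.Indep I)
    (harc : ∀ i ∈ Q, M.ExchangeArc I (x i) (y i))
    (htri : ∀ i ∈ Q, ∀ l ∈ Q, i < l → y l ∉ M.fundCircuit (x i) I) :
    I ⊆ M.closure ((I \ y '' Q) ∪ x '' Q) := by
  set S := (I \ y '' Q) ∪ x '' Q
  have hxS : ∀ i ∈ Q, x i ∈ M.closure S := fun i hi ↦
    M.mem_closure_of_mem' (mem_union_right _ (mem_image_of_mem x hi))
      (M.closure_subset_ground _ (harc i hi).1.1)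
  -- `y c` is spanned by the rest of its fundamental circuit, which by triangularity lies in
  -- `S` together with the earlier `y l`.
  have hyS : ∀ c ∈ Q, y c ∈ M.closure S := by
    intro c
    induction c using Nat.strong_induction_on with
    | _ c ih =>
    intro hc
    have hC := hI.fundCircuit_isCircuit (harc c hc).1.1 (harc c hc).1.2
    refine M.closure_subset_closure_of_subset_closure (fun v hv ↦ ?_)
      (hC.mem_closure_sdiff_singleton_of_mem (harc c hc).2.1)
    obtain ⟨hvC, hvc⟩ := hv
    obtain rfl | hvI := M.fundCircuit_subset_insert _ _ hvC
    · exact hxS c hc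
    by_cases hvy : v ∈ y '' Q
    · obtain ⟨l, hl, rfl⟩ := hvy
      obtain hlc | rfl | hcl := lt_trichotomy l c
      · exact ih l hlc hl
      · exact absurd rfl hvc
      · exact absurd hvC (htri c hc l hl hcl)
    · exact M.mem_closure_of_mem' (mem_union_left _ ⟨hvI, hvy⟩) (hI.subset_ground hvI)
  intro v hv
  by_cases hvy : v ∈ y '' Q
  · obtain ⟨l, hl, rfl⟩ := hvy
    exact hyS l hl
  · exact M.mem_closure_of_mem' (mem_union_left _ ⟨hv, hvy⟩) (hI.subset_ground hv)

lemma Indep.sdiff_union_indep_of_triangular (hI : M.Indep I) (hIfin : I.Finite)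
    (harc : ∀ i ∈ Q, M.ExchangeArc I (x i) (y i))
    (htri : ∀ i ∈ Q, ∀ l ∈ Q, i < l → y l ∉ M.fundCircuit (x i) I) :
    M.Indep ((I \ y '' Q) ∪ x '' Q) := by
  have hyinj : InjOn y Q := by
    intro i hi l hl hil
    by_contra hne
    obtain h | h := lt_or_gt_of_ne hne
    · exact htri i hi l hl h (hil ▸ (harc i hi).2.1)
    · exact htri l hl i hi h (hil.symm ▸ (harc l hl).2.1)
  have hyI : y '' Q ⊆ I := by
    rintro _ ⟨i, hi, rfl⟩
    exact (harc i hi).2.2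
  refine hI.indep_of_subset_closure hIfin (hI.subset_closure_of_triangular harc htri)
    (union_subset (sdiff_subset.trans hI.subset_ground) ?_) ?_
  · rintro _ ⟨i, hi, rfl⟩
    exact M.closure_subset_ground _ (harc i hi).1.1
  calc ((I \ y '' Q) ∪ x '' Q).encard ≤ (I \ y '' Q).encard + (x '' Q).encard := encard_union_le _ _
    _ ≤ (I \ y '' Q).encard + (y '' Q).encard := by
      rw [hyinj.encard_image]
      gcongr; exact encard_image_le _ _
    _ = I.encard := encard_sdiff_add_encard_of_subset hyI

end Triangular

lemma Indep.isBasis'_inter_of_fundCircuit_subset (hI : M.Indep I)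
    (hU : ∀ u ∈ U \ I, ¬ M.Indep (insert u I) ∧ (u ∈ M.closure I → M.fundCircuit u I ∩ I ⊆ U)) :
    M.IsBasis' (I ∩ U) U := by
  rw [isBasis'_iff_isBasis_inter_ground]
  refine (hI.subset inter_subset_left).isBasis_of_forall_insert
    (subset_inter inter_subset_right (inter_subset_left.trans hI.subset_ground)) ?_
  rintro u ⟨⟨huU, huE⟩, huIU⟩
  have huI : u ∉ I := fun h ↦ huIU ⟨h, huU⟩
  obtain ⟨hdep, hcirc⟩ := hU u ⟨huU, huI⟩
  have hcl : u ∈ M.closure I := by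
    by_contra h
    exact hdep ((hI.insert_indep_iff_of_notMem huI).2 ⟨huE, h⟩)
  refine (hI.fundCircuit_isCircuit hcl huI).dep.superset (fun v hv ↦ ?_)
    (insert_subset huE (inter_subset_left.trans hI.subset_ground))
  obtain rfl | hvI := M.fundCircuit_subset_insert _ _ hv
  · exact mem_insert _ _
  · exact mem_insert_of_mem _ ⟨hvI, hcirc hcl ⟨hv, hvI⟩⟩

/-- `z(X) ≤ k · r(X)` for every finite `X`, the rank being the size of a basis. -/
def IsRankBounded (M : Matroid α) (k : ℕ) (z : α → ℤ) : Prop :=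
  ∀ (X : Finset α) (I : Set α), M.IsBasis' I X → ∑ e ∈ X, z e ≤ k * I.ncard

section Partition

variable {ι : Type*} [Fintype ι] {F : ι → Set α} {z : α → ℤ}

/-- The arcs of the exchange graph of the family `F`. -/
def PartitionArc (M : Matroid α) (F : ι → Set α) (e f : α) : Prop :=
  ∃ j, M.ExchangeArc (F j) e f

def Insertable (M : Matroid α) (F : ι → Set α) (e : α) : Prop :=
  ∃ j, e ∉ F j ∧ M.Indep (insert e (F j))

lemma exists_exchange_along_path [DecidableEq α] [M.RankFinite] {G : ι → Set α}
    (hG : ∀ j, M.Indep (G j)) {n : ℕ} {u : ℕ → α} (hinj : InjOn u (Iic n)) (lab : ℕ → ι)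
    (harc : ∀ i < n, M.ExchangeArc (G (lab i)) (u i) (u (i + 1)))
    (htri : ∀ i l, i < l → l < n → lab i = lab l → u (l + 1) ∉ M.fundCircuit (u i) (G (lab i))) :
    ∃ F' : ι → Set α, (∀ j, M.Indep (F' j)) ∧
      coverCount F' =
        coverCount G + ∑ i ∈ Finset.range n, (Pi.single (u i) 1 - Pi.single (u (i + 1)) 1) := by
  classical
  set Q : ι → Finset ℕ := fun j ↦ (Finset.range n).filter (lab · = j)
  have hQ : ∀ j, ∀ i ∈ Q j, i < n ∧ lab i = j := by simp [Q]
  have harcQ : ∀ j, ∀ i ∈ Q j, M.ExchangeArc (G j) (u i) (u (i + 1)) := by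
    intro j i hi
    obtain ⟨hin, rfl⟩ := hQ j i hi
    exact harc i hin
  have hinjQ : ∀ j, InjOn u (Q j) :=
    fun j ↦ hinj.mono fun i hi ↦ mem_Iic.2 (hQ j i hi).1.le
  have hinjQsucc : ∀ j, InjOn (fun i ↦ u (i + 1)) (Q j) := fun j i hi l hl h ↦
    Nat.succ_injective (hinj (mem_Iic.2 (hQ j i hi).1) (mem_Iic.2 (hQ j l hl).1) h)
  refine ⟨fun j ↦ (G j \ (fun i ↦ u (i + 1)) '' Q j) ∪ u '' Q j,
    fun j ↦ (hG j).sdiff_union_indep_of_triangular (hG j).finite (harcQ j) ?_, ?_⟩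
  · intro i hi l hl hil
    obtain ⟨-, rfl⟩ := hQ j i hi
    obtain ⟨hln, hl⟩ := hQ _ l hl
    exact htri i l hil hln hl.symm
  calc coverCount (fun j ↦ (G j \ (fun i ↦ u (i + 1)) '' Q j) ∪ u '' Q j)
      = coverCount G + ∑ j, ∑ i ∈ Q j, (Pi.single (u i) 1 - Pi.single (u (i + 1)) 1) := by
        simp only [coverCount, ← Finset.sum_add_distrib]
        refine Finset.sum_congr rfl fun j _ ↦ indicator_sdiff_union_image
          (fun i hi ↦ (harcQ j i hi).1.2) (fun i hi ↦ (harcQ j i hi).2.2) (hinjQ j) (hinjQsucc j)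
    _ = _ := by
        rw [Finset.sum_fiberwise_of_maps_to (fun i _ ↦ Finset.mem_univ (lab i))]

lemma coverCount_update_insert [DecidableEq α] [DecidableEq ι] {j₀ : ι} {e : α} (he : e ∉ F j₀) :
    coverCount (Function.update F j₀ (insert e (F j₀))) = coverCount F + Pi.single e 1 := by
  simp only [coverCount, ← Finset.add_sum_erase _ _ (Finset.mem_univ j₀), update_self]
  rw [Finset.sum_congr rfl fun j hj ↦ by rw [update_of_ne (Finset.ne_of_mem_erase hj)], insert_eq,
    indicator_union_of_disjoint (disjoint_singleton_left.2 he), indicator_singleton]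
  ext; simp only [Pi.add_apply, Pi.one_apply]; ring

lemma exists_augment_of_shortest_path [DecidableEq α] [M.RankFinite]
    (hF : ∀ j, M.Indep (F j)) {n : ℕ} {u : ℕ → α} (hinj : InjOn u (Iic n)) (lab : ℕ → ι)
    (harc : ∀ i < n, M.ExchangeArc (F (lab i)) (u i) (u (i + 1)))
    (hshort : ∀ i l, i + 1 < l → l ≤ n → ¬ M.PartitionArc F (u i) (u l))
    {j₀ : ι} (hnF : u n ∉ F j₀) (hins : M.Indep (insert (u n) (F j₀))) :
    ∃ F' : ι → Set α, (∀ j, M.Indep (F' j)) ∧ coverCount F' = coverCount F + Pi.single (u 0) 1 := by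
  classical
  -- Insert `u n` first: the fundamental circuits of the `u i` do not change, so the exchanges can
  -- be carried out in the enlarged family.
  set G := Function.update F j₀ (insert (u n) (F j₀))
  have hG : ∀ j, M.Indep (G j) := by
    intro j
    obtain rfl | hj := eq_or_ne j j₀
    · simpa [G] using hins
    · simpa [G, hj] using hF j
  have hFG : ∀ j, F j ⊆ G j := by
    intro j
    obtain rfl | hj := eq_or_ne j j₀
    · simp [G]
    · simp [G, hj]
  have hnG : ∀ i < n, u i ∉ G (lab i) := by
    intro i hi
    obtain hj | hj := eq_or_ne (lab i) j₀
    · rw [hj, show G j₀ = insert (u n) (F j₀) by simp [G]]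
      rintro (h | h)
      · exact hi.ne (hinj (mem_Iic.2 hi.le) (mem_Iic.2 le_rfl) h)
      · exact (harc i hi).1.2 (hj ▸ h)
    · simpa [G, hj] using (harc i hi).1.2
  obtain ⟨F', hF', hcount⟩ := exists_exchange_along_path hG hinj lab
    (fun i hi ↦ (harc i hi).mono (hG _) (hFG _) (hnG i hi)) (by
      intro i l hil hln hlab hmem
      rw [(hG _).fundCircuit_eq_of_subset (hFG _) (harc i (hil.trans hln)).1.1
        (hnG i (hil.trans hln))] at hmem
      exact hshort i (l + 1) (by omega) hln
        ⟨lab i, (harc i (hil.trans hln)).1, hmem, hlab ▸ (harc l hln).2.2⟩)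
  refine ⟨F', hF', ?_⟩
  rw [hcount, Finset.sum_range_sub', coverCount_update_insert hnF]
  abel

lemma exists_reachable_insertable [Fintype α] (hF : ∀ j, M.Indep (F j))
    (hrank : M.IsRankBounded (Fintype.card ι) z)
    (hle : coverCount F ≤ z) {e₀ : α} (he₀ : coverCount F e₀ < z e₀) :
    ∃ w, Relation.ReflTransGen (M.PartitionArc F) e₀ w ∧ M.Insertable F w := by
  classical
  by_contra! H
  set U := Finset.univ.filter (Relation.ReflTransGen (M.PartitionArc F) e₀)
  have hmemU : ∀ v, v ∈ U ↔ Relation.ReflTransGen (M.PartitionArc F) e₀ v := by simp [U]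
  have hbasis : ∀ j, M.IsBasis' (F j ∩ U) U := fun j ↦ (hF j).isBasis'_inter_of_fundCircuit_subset
    fun v ⟨hvU, hvF⟩ ↦ ⟨fun hind ↦ H v ((hmemU v).1 hvU) ⟨j, hvF, hind⟩,
      fun hcl w hw ↦ (hmemU w).2 (((hmemU v).1 hvU).tail ⟨j, ⟨hcl, hvF⟩, hw⟩)⟩
  obtain ⟨I, hI⟩ := M.exists_isBasis' (U : Set α)
  have hsum : ∑ e ∈ U, coverCount F e = Fintype.card ι * I.ncard := by
    simp only [coverCount, Finset.sum_apply]
    rw [Finset.sum_comm]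
    simp [Finset.sum_indicator_one_eq_ncard, (hbasis _).ncard_eq_ncard hI]
  have hlt : ∑ e ∈ U, coverCount F e < ∑ e ∈ U, z e :=
    Finset.sum_lt_sum (fun e _ ↦ hle e) ⟨e₀, (hmemU e₀).2 .refl, he₀⟩
  linarith [hrank U I hI]

lemma exists_augment [Fintype α] [DecidableEq α] (hF : ∀ j, M.Indep (F j))
    (hrank : M.IsRankBounded (Fintype.card ι) z)
    (hle : coverCount F ≤ z) {e₀ : α} (he₀ : coverCount F e₀ < z e₀) :
    ∃ F' : ι → Set α, (∀ j, M.Indep (F' j)) ∧ coverCount F' = coverCount F + Pi.single e₀ 1 := by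
  obtain ⟨w, hreach, hw⟩ := exists_reachable_insertable hF hrank hle he₀
  obtain ⟨n, u, rfl, hchain, ⟨j₀, hnF, hins⟩, hinj, hshort⟩ := hreach.exists_shortest hw
  have hlab : ∀ i, ∃ j, i < n → M.ExchangeArc (F j) (u i) (u (i + 1)) := fun i ↦
    if hi : i < n then (hchain i hi).imp fun _ h _ ↦ h else ⟨j₀, fun h ↦ absurd h hi⟩
  choose lab harc using hlab
  exact exists_augment_of_shortest_path hF hinj lab harc hshort hnF hins

theorem exists_indep_family_coverCount_eq [Fintype α] (hz : 0 ≤ z)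
    (hrank : M.IsRankBounded (Fintype.card ι) z) :
    ∃ F : ι → Set α, (∀ j, M.Indep (F j)) ∧ coverCount F = z := by
  classical
  suffices h : ∀ d : ℕ, ∀ F : ι → Set α, (∀ j, M.Indep (F j)) → coverCount F ≤ z →
      ∑ e, (z e - coverCount F e) = d → ∃ F' : ι → Set α, (∀ j, M.Indep (F' j)) ∧ coverCount F' = z
    from h (∑ e, z e).toNat (fun _ ↦ ∅) (fun _ ↦ M.empty_indep)
      (by simpa only [coverCount, indicator_empty', Finset.sum_const_zero])
      (by simp [coverCount, Int.toNat_of_nonneg (Finset.sum_nonneg fun e _ ↦ hz e)])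
  intro d
  induction d with
  | zero =>
    intro F hF hle hd
    refine ⟨F, hF, le_antisymm hle fun e ↦ ?_⟩
    have := (Finset.sum_eq_zero_iff_of_nonneg fun e _ ↦ sub_nonneg.2 (hle e)).1 (by simpa using hd)
    linarith [this e (Finset.mem_univ e)]
  | succ d ih =>
    intro F hF hle hd
    obtain ⟨e₀, he₀⟩ : ∃ e₀, coverCount F e₀ < z e₀ := by
      by_contra! h
      have : ∑ e, (z e - coverCount F e) = 0 :=
        Finset.sum_eq_zero fun e _ ↦ by linarith [hle e, h e]
      omega
    obtain ⟨F', hF', hcount⟩ := exists_augment hF hrank hle he₀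
    refine ih F' hF' ?_ ?_
    · rw [hcount]
      intro e
      obtain rfl | he := eq_or_ne e e₀
      · simpa using he₀
      · simpa [he] using hle e
    · rw [hcount]
      simp only [Pi.add_apply, sub_add_eq_sub_sub, Finset.sum_sub_distrib] at hd ⊢
      simp only [Finset.sum_pi_single', Finset.mem_univ, if_true]
      omega

theorem exists_isBase_family_coverCount_eq [Fintype α] (hz : 0 ≤ z)
    (hrank : M.IsRankBounded (Fintype.card ι) z)
    {B : Set α} (hB : M.IsBase B) (hsum : Fintype.card ι * B.ncard ≤ ∑ e, z e) :
    ∃ F : ι → Set α, (∀ j, M.IsBase (F j)) ∧ coverCount F = z := by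
  obtain ⟨F, hF, rfl⟩ := exists_indep_family_coverCount_eq hz hrank
  have hle : ∀ j, (F j).ncard ≤ B.ncard := fun j ↦
    (hF j).ncard_le_of_isBasis' (hF j).subset_ground hB.isBasis_ground.isBasis'
  have htotal : ∑ e, coverCount F e = ∑ j, ((F j).ncard : ℤ) := by
    simp only [coverCount, Finset.sum_apply]
    rw [Finset.sum_comm]
    simp [Finset.sum_indicator_one_eq_ncard]
  have hcard : ∀ j, (F j).ncard = B.ncard := by
    by_contra! h
    obtain ⟨j, hj⟩ := h
    have : ∑ j, ((F j).ncard : ℤ) < ∑ _j : ι, (B.ncard : ℤ) :=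
      Finset.sum_lt_sum (fun j _ ↦ by exact_mod_cast hle j) ⟨j, Finset.mem_univ j, by
        exact_mod_cast (hle j).lt_of_ne hj⟩
    simp only [Finset.sum_const, Finset.card_univ, nsmul_eq_mul] at this
    linarith
  refine ⟨F, fun j ↦ (hF j).isBase_of_eRk_ge (F j).toFinite ?_, rfl⟩
  rw [(hF j).eRk_eq_encard, ← hB.encard_eq_eRank, ← (F j).toFinite.cast_ncard_eq,
    ← B.toFinite.cast_ncard_eq, hcard j]

end Partition

def baseIndicators (M : Matroid α) : Set (α → ℤ) :=
  {a | ∃ B : Set α, M.IsBase B ∧ a = B.indicator 1}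

lemma nonneg_of_mem_span_baseIndicators {v : α → ℝ}
    (hv : v ∈ Submodule.span NNReal ((fun a : α → ℤ => fun i => (a i : ℝ)) '' M.baseIndicators))
    (e : α) : 0 ≤ v e := by
  refine (LinearMap.proj e).nonneg_of_mem_span_nnreal ?_ hv
  rintro _ ⟨_, ⟨B, -, rfl⟩, rfl⟩
  simp only [LinearMap.coe_proj, Function.eval]
  exact_mod_cast indicator_nonneg (fun _ _ ↦ zero_le_one) e

section Fintype

variable [Fintype α] {B₀ : Set α} {z : α → ℤ}

lemma sum_eq_of_mem_baseIndicators (hB₀ : M.IsBase B₀) {a : α → ℤ} (ha : a ∈ M.baseIndicators) :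
    ∑ e, a e = B₀.ncard := by
  obtain ⟨B, hB, rfl⟩ := ha
  rw [Finset.sum_indicator_one_eq_ncard, Finset.coe_univ, inter_univ,
    hB.ncard_eq_ncard_of_isBase hB₀]

lemma exists_mul_ncard_eq_sum_of_mem_closure_baseIndicators (hB₀ : M.IsBase B₀)
    (hz : z ∈ AddSubgroup.closure M.baseIndicators) : ∃ n : ℤ, n * B₀.ncard = ∑ e, z e := by
  simpa using AddSubgroup.mem_zmultiples_iff.1 <|
    (AddMonoidHom.mk' (fun x : α → ℤ ↦ ∑ e, x e) fun _ _ ↦ Finset.sum_add_distrib)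
      |>.mem_zmultiples_of_mem_closure (fun a ha ↦ sum_eq_of_mem_baseIndicators hB₀ ha) hz

lemma sum_le_mul_ncard_of_mem_span_baseIndicators (hB₀ : M.IsBase B₀) (hr : 0 < B₀.ncard)
    (hz : (fun i => (z i : ℝ)) ∈
      Submodule.span NNReal ((fun a : α → ℤ => fun i => (a i : ℝ)) '' M.baseIndicators))
    {n : ℤ} (hn : n * B₀.ncard = ∑ e, z e) {X : Finset α} {I : Set α} (hI : M.IsBasis' I X) :
    ∑ e ∈ X, z e ≤ n * I.ncard := by
  set ℓ : (α → ℝ) →ₗ[ℝ] ℝ := (I.ncard : ℝ) • ∑ e, LinearMap.proj e -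
    (B₀.ncard : ℝ) • ∑ e ∈ X, LinearMap.proj e
  have hℓ : ∀ w, ℓ w = I.ncard * ∑ e, w e - B₀.ncard * ∑ e ∈ X, w e := by simp [ℓ]
  have hS : ∀ s ∈ (fun a : α → ℤ => fun i => (a i : ℝ)) '' M.baseIndicators, 0 ≤ ℓ s := by
    rintro _ ⟨_, ⟨B, hB, rfl⟩, rfl⟩
    have hE : ∑ e, ((B.indicator 1 e : ℤ) : ℝ) = B₀.ncard := by
      exact_mod_cast sum_eq_of_mem_baseIndicators hB₀ ⟨B, hB, rfl⟩
    have hX : ∑ e ∈ X, ((B.indicator 1 e : ℤ) : ℝ) = (B ∩ X).ncard := by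
      exact_mod_cast Finset.sum_indicator_one_eq_ncard B X
    have hBX : ((B ∩ X).ncard : ℝ) ≤ I.ncard := by
      exact_mod_cast (hB.indep.subset inter_subset_left).ncard_le_of_isBasis' inter_subset_right hI
    rw [hℓ, hE, hX]
    nlinarith [(Nat.cast_nonneg B₀.ncard : (0 : ℝ) ≤ B₀.ncard)]
  have hcone := hℓ _ ▸ ℓ.nonneg_of_mem_span_nnreal hS hz
  have hn' : ∑ e, (z e : ℝ) = n * B₀.ncard := by exact_mod_cast hn.symm
  have : (B₀.ncard : ℝ) * ∑ e ∈ X, (z e : ℝ) ≤ B₀.ncard * (n * I.ncard) := by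
    rw [hn'] at hcone
    linarith
  exact_mod_cast le_of_mul_le_mul_left this (by exact_mod_cast hr)

end Fintype

end Matroid

open Matroid in
/-- The set `A` of indicator vectors of the bases of a matroid on a
finite ground set is normal: every element of the subgroup of `(ℤᴱ,+)` generated by `A`
whose image in `ℝᴱ` lies in the cone of nonnegative real combinations of `A` already
belongs to the additive submonoid generated by `A`. -/
theorem matroid_base_indicator_vectors_normal
    {E : Type} [Fintype E] (M : Matroid E)
    (A : Set (E → ℤ))
    (hA : A = {a : E → ℤ | ∃ B : Set E, M.IsBase B ∧ a = B.indicator 1})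
    (z : E → ℤ) (hz : z ∈ AddSubgroup.closure A)
    (hcone : (fun i => (z i : ℝ)) ∈
      Submodule.span NNReal ((fun a : E → ℤ => fun i => (a i : ℝ)) '' A)) :
    z ∈ AddSubmonoid.closure A := by
  change A = M.baseIndicators at hA
  subst hA
  obtain ⟨B₀, hB₀⟩ := M.exists_isBase
  obtain ⟨n, hn⟩ := exists_mul_ncard_eq_sum_of_mem_closure_baseIndicators hB₀ hz
  have hz0 : 0 ≤ z := fun e ↦ by exact_mod_cast nonneg_of_mem_span_baseIndicators hcone e
  obtain hr | hr := Nat.eq_zero_or_pos B₀.ncard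
  · obtain rfl : z = 0 := funext fun e ↦ (Finset.sum_eq_zero_iff_of_nonneg fun e _ ↦ hz0 e).1
      (by simp [← hn, hr]) e (Finset.mem_univ e)
    exact zero_mem _
  have hn0 : 0 ≤ n := nonneg_of_mul_nonneg_left (hn ▸ Finset.sum_nonneg fun e _ ↦ hz0 e)
    (by exact_mod_cast hr)
  obtain ⟨F, hF, rfl⟩ := exists_isBase_family_coverCount_eq (ι := Fin n.toNat) hz0
    (fun X I hI ↦ by simpa [Int.toNat_of_nonneg hn0] using
      sum_le_mul_ncard_of_mem_span_baseIndicators hB₀ hr hcone hn hI)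
    hB₀ (by simp [Int.toNat_of_nonneg hn0, hn])
  exact AddSubmonoid.sum_mem _ fun j _ ↦ AddSubmonoid.subset_closure ⟨F j, hF j, rfl⟩
end

section
/- Let M be a matroid on a finite ground set E. Then the base polytope P(M) = conv{χ_B : B a base of M} ⊆ ℝ^E is a generalized permutohedron; in fact, for every edge [x,y] of P(M) there exist distinct elements i, j ∈ E with y - x = e_i - e_j. -/
/-!
Both endpoints of an edge of `P(M)` are vertices, hence indicator vectors of bases `B₁ ≠ B₂`.
Pick `a ∈ B₁ \ B₂`; by symmetric basis exchange there is `b ∈ B₂ \ B₁` such that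
`B₁ - a + b` and `B₂ - b + a` are bases. Their indicator vectors have the same sum as those of
`B₁` and `B₂`, so the common midpoint lies in the edge and extremality puts `χ (B₁ - a + b)` on
the edge. It vanishes at `a`, where `χ B₁` is `1` and `χ B₂` is `0`, so it equals `χ B₂`, whence
`y - x = e_b - e_a`.
-/

open Set

namespace Matroid

variable {α : Type*} {M : Matroid α} {B₁ B₂ : Set α} {a : α}

theorem IsBase.exists_symm_exchange (hB₁ : M.IsBase B₁) (hB₂ : M.IsBase B₂) (ha : a ∈ B₁ \ B₂) :
    ∃ b ∈ B₂ \ B₁, M.IsBase (insert b B₁ \ {a}) ∧ M.IsBase (insert a B₂ \ {b}) := by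
  have haE := hB₁.subset_ground ha.1
  obtain ⟨b, ⟨hbC, hbK⟩, hba⟩ :=
    ((hB₂.fundCircuit_isCircuit haE ha.2).isCocircuit_inter_nontrivial
      (M.fundCocircuit_isCocircuit ha.1 hB₁)
      ⟨a, M.mem_fundCircuit a B₂, M.mem_fundCocircuit a B₁⟩).exists_ne a
  have hbB₂ : b ∈ B₂ := by simpa [hba] using M.fundCircuit_subset_insert a B₂ hbC
  have hbB₁ : b ∈ M.E \ B₁ := by simpa [hba] using M.fundCocircuit_subset_insert_compl a B₁ hbK
  rw [hB₁.mem_fundCocircuit_iff_mem_fundCircuit,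
    hB₁.indep.mem_fundCircuit_iff (by rw [hB₁.closure_eq]; exact hbB₁.1) hbB₁.2] at hbK
  rw [hB₂.indep.mem_fundCircuit_iff (by rwa [hB₂.closure_eq]) ha.2] at hbC
  exact ⟨b, ⟨hbB₂, hbB₁.2⟩, hB₁.exchange_isBase_of_indep' ha.1 hbB₁.2 hbK,
    hB₂.exchange_isBase_of_indep' hbB₂ ha.2 hbC⟩

end Matroid

section Extreme

variable {𝕜 V : Type*} [Field 𝕜] [LinearOrder 𝕜] [IsStrictOrderedRing 𝕜] [AddCommGroup V]
  [Module 𝕜 V] {P : Set V} {x y u v : V}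

theorem left_mem_extremePoints_segment (hxy : x ≠ y) : x ∈ (segment 𝕜 x y).extremePoints 𝕜 := by
  rw [(convex_segment x y).mem_extremePoints_iff_convex_sdiff, segment_eq_image_lineMap]
  refine ⟨⟨0, left_mem_Icc.2 zero_le_one, AffineMap.lineMap_apply_zero x y⟩, ?_⟩
  have hx : ({x} : Set V) = AffineMap.lineMap x y '' {(0 : 𝕜)} := by simp
  rw [hx, ← image_sdiff (AffineMap.lineMap_injective 𝕜 hxy), Icc_sdiff_left]
  exact (convex_Ioc 0 1).affine_image _

theorem IsExtreme.left_mem_extremePoints (h : IsExtreme 𝕜 P (segment 𝕜 x y)) (hxy : x ≠ y) :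
    x ∈ P.extremePoints 𝕜 :=
  isExtreme_singleton.1 (h.trans (isExtreme_singleton.2 (left_mem_extremePoints_segment hxy)))

theorem IsExtreme.mem_segment_of_add_eq (h : IsExtreme 𝕜 P (segment 𝕜 x y)) (hu : u ∈ P)
    (hv : v ∈ P) (huv : u + v = x + y) : u ∈ segment 𝕜 x y := by
  have hmid : midpoint 𝕜 u v = midpoint 𝕜 x y := by
    rw [midpoint_eq_smul_add, midpoint_eq_smul_add, huv]
  exact h.2 hu hv (midpoint_mem_segment x y) (hmid ▸ midpoint_mem_openSegment u v)

end Extreme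

theorem eq_right_of_mem_segment_of_apply_eq {𝕜 ι : Type*} [Field 𝕜] [LinearOrder 𝕜]
    [IsStrictOrderedRing 𝕜] {x y z : ι → 𝕜} {i : ι} (hz : z ∈ segment 𝕜 x y) (hzi : z i = y i)
    (hxi : x i ≠ y i) : z = y := by
  obtain ⟨s, t, -, -, hst, rfl⟩ := hz
  have hs : s = 0 := by
    have : s * (x i - y i) = 0 := by
      simp only [Pi.add_apply, Pi.smul_apply, smul_eq_mul] at hzi
      linear_combination hzi - y i * hst
    exact (mul_eq_zero.1 this).resolve_right (sub_ne_zero.2 hxi)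
  obtain rfl : t = 1 := by linarith
  simp [hs]

theorem Set.indicator_one_insert_sdiff {ι R : Type*} [DecidableEq ι] [AddGroupWithOne R]
    {s : Set ι} {a b : ι} (ha : a ∈ s) (hb : b ∉ s) :
    (insert b s \ {a}).indicator (1 : ι → R) = s.indicator 1 + Pi.single b 1 - Pi.single a 1 := by
  have hab : a ≠ b := ne_of_mem_of_not_mem ha hb
  ext i
  by_cases hia : i = a
  · subst hia; simp [ha, hab]
  by_cases hib : i = b
  · subst hib; simp [hb, hab.symm]
  have hi : i ∈ insert b s \ {a} ↔ i ∈ s := by simp [hia, hib]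
  rw [Pi.sub_apply, Pi.add_apply, Pi.single_eq_of_ne hib, Pi.single_eq_of_ne hia, add_zero,
    sub_zero]
  by_cases his : i ∈ s
  · rw [indicator_of_mem his, indicator_of_mem (hi.2 his)]
  · rw [indicator_of_notMem his, indicator_of_notMem (mt hi.1 his)]

theorem matroid_base_polytope_generalized_permutohedron_general
    {E : Type} [DecidableEq E] (M : Matroid E)
    (P : Set (E → ℝ))
    (hP : P = convexHull ℝ {x : E → ℝ | ∃ B : Set E, M.IsBase B ∧ x = B.indicator 1})
    (x y : E → ℝ) (hxy : x ≠ y) (hedge : IsExtreme ℝ P (segment ℝ x y)) :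
    ∃ i j : E, i ≠ j ∧ y - x = (Pi.single i 1 : E → ℝ) - Pi.single j 1 := by
  subst hP
  obtain ⟨B₁, hB₁, rfl⟩ := extremePoints_convexHull_subset (hedge.left_mem_extremePoints hxy)
  obtain ⟨B₂, hB₂, rfl⟩ := extremePoints_convexHull_subset
    ((segment_symm ℝ _ y ▸ hedge).left_mem_extremePoints hxy.symm)
  obtain ⟨a, ha⟩ : (B₁ \ B₂).Nonempty :=
    sdiff_nonempty.2 fun h ↦ hxy (by rw [hB₁.eq_of_subset_isBase hB₂ h])
  obtain ⟨b, hb, hB₁', hB₂'⟩ := hB₁.exists_symm_exchange hB₂ ha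
  have hmem : (insert b B₁ \ {a}).indicator 1 ∈ segment ℝ (B₁.indicator 1) (B₂.indicator 1) :=
    hedge.mem_segment_of_add_eq (subset_convexHull ℝ _ ⟨_, hB₁', rfl⟩)
      (subset_convexHull ℝ _ ⟨_, hB₂', rfl⟩)
      (by rw [indicator_one_insert_sdiff ha.1 hb.2, indicator_one_insert_sdiff hb.1 ha.2]; abel)
  have hB₂_indicator : (insert b B₁ \ {a}).indicator 1 = B₂.indicator (1 : E → ℝ) :=
    eq_right_of_mem_segment_of_apply_eq hmem (i := a) (by simp [ha.2]) (by simp [ha.1, ha.2])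
  refine ⟨b, a, fun h ↦ hb.2 (h ▸ ha.1), ?_⟩
  rw [← hB₂_indicator, indicator_one_insert_sdiff ha.1 hb.2]; abel

/-- The base polytope of a matroid on a finite ground set is a
generalized permutohedron: every edge `[x,y]` satisfies `y - x = e_i - e_j` for some
distinct `i, j`. -/
theorem matroid_base_polytope_generalized_permutohedron
    {E : Type} [Fintype E] [DecidableEq E] (M : Matroid E)
    (P : Set (E → ℝ))
    (hP : P = convexHull ℝ {x : E → ℝ | ∃ B : Set E, M.IsBase B ∧ x = B.indicator 1})
    (x y : E → ℝ) (hxy : x ≠ y) (hedge : IsExtreme ℝ P (segment ℝ x y)) :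
    ∃ i j : E, i ≠ j ∧ y - x = (Pi.single i 1 : E → ℝ) - Pi.single j 1 :=
  matroid_base_polytope_generalized_permutohedron_general M P hP x y hxy hedge
end

section
/- Let V ⊆ {0,1}^n be a nonempty finite set of 0/1 vectors, each having exactly k coordinates equal to 1, and let P = conv(V) ⊆ ℝ^n. Suppose every edge of P is parallel to e_i - e_j for some i ≠ j. Then the family B = {supp(v) : v an extreme point of P} of supports of the vertices of P satisfies the matroid base exchange axiom: for all B₁, B₂ ∈ B and all i ∈ B₁ \ B₂ there exists j ∈ B₂ \ B₁ with (B₁ \ {i}) ∪ {j} ∈ B. Hence P is the base polytope of a matroid. -/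
/-!
Let `S = supp x ∪ supp y`. The vertices of `P` supported in `S` span a face `F` of `P` containing
`x` and `y`. Since `y i = 0 < 1 = x i`, the vertex `x` of `F` does not minimise the `i`-th
coordinate on `F`, so some edge `[x, v]` of `F` (hence of `P`) decreases it. That edge points
along `e_j - e_i`, so `supp v = supp x - i + j`, and `j ∈ S \ supp x ⊆ supp y`.

That a non-minimising vertex `x` of a polytope has a decreasing edge is proved by induction on
the number of points: tilt a functional that exposes `x` until it also supports a vertex with
smaller `w`; the exposed face is proper unless every functional is affine in `w` on the points,
i.e. the polytope is a segment, and then the segment itself is the edge.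
-/

open Filter Topology

def FactorsAffinelyOn {α : Type*} (w g : α → ℝ) (s : Set α) : Prop :=
  ∃ a c : ℝ, ∀ v ∈ s, g v = a * w v + c

section Polytope

variable {E : Type*} [NormedAddCommGroup E] [NormedSpace ℝ E]

theorem isExposed_convexHull_inter_level (W : Finset E) {f : StrongDual ℝ E} {M : ℝ}
    (hle : ∀ v ∈ W, f v ≤ M) :
    IsExposed ℝ (convexHull ℝ ↑W) {z ∈ convexHull ℝ ↑W | f z = M} := by
  have hleA : ∀ z ∈ convexHull ℝ (W : Set E), f z ≤ M :=
    fun z hz => convexHull_min hle (convex_halfSpace_le f.isLinear M) hz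
  rintro ⟨z₀, hz₀, hfz₀⟩
  refine ⟨f, Set.ext fun z => and_congr_right fun hz => ?_⟩
  exact ⟨fun h y hy => h ▸ hleA y hy, fun h => (hleA z hz).antisymm (hfz₀ ▸ h z₀ hz₀)⟩

theorem convexHull_filter_eq_inter_level (W : Finset E) {f : StrongDual ℝ E} {M : ℝ}
    (hle : ∀ v ∈ W, f v ≤ M) :
    convexHull ℝ ↑(W.filter (f · = M)) = {z ∈ convexHull ℝ ↑W | f z = M} := by
  have hexp := isExposed_convexHull_inter_level W hle
  apply subset_antisymm
  · intro z hz
    refine ⟨convexHull_mono (Finset.coe_subset.2 (Finset.filter_subset _ W)) hz, ?_⟩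
    exact convexHull_min (fun v hv => (Finset.mem_filter.1 hv).2)
      (convex_hyperplane f.isLinear M) hz
  · rw [← closure_convexHull_extremePoints (hexp.isCompact (W.finite_toSet.isCompact_convexHull ℝ))
      (hexp.convex (convex_convexHull ℝ _))]
    refine closure_minimal (convexHull_mono ?_)
      ((Finset.finite_toSet _).isCompact_convexHull ℝ).isClosed
    rw [hexp.isExtreme.extremePoints_eq]
    rintro z ⟨⟨-, hz⟩, hzext⟩
    exact Finset.mem_filter.2 ⟨extremePoints_convexHull_subset hzext, hz⟩

theorem isExtreme_convexHull_filter (W : Finset E) {f : StrongDual ℝ E} {M : ℝ}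
    (hle : ∀ v ∈ W, f v ≤ M) :
    IsExtreme ℝ (convexHull ℝ ↑W) (convexHull ℝ (↑(W.filter (f · = M)) : Set E)) := by
  rw [convexHull_filter_eq_inter_level W hle]
  exact (isExposed_convexHull_inter_level W hle).isExtreme

theorem exists_forall_lt_of_mem_extremePoints_convexHull {W : Finset E} {x : E}
    (hx : x ∈ (convexHull ℝ ↑W).extremePoints ℝ) :
    ∃ h : StrongDual ℝ E, ∀ v ∈ W, v ≠ x → h v < h x := by
  classical
  have hsub : (↑(W.erase x) : Set E) ⊆ convexHull ℝ ↑W \ {x} := fun v hv =>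
    ⟨subset_convexHull ℝ _ (Finset.mem_of_mem_erase hv), Finset.ne_of_mem_erase hv⟩
  have hx' : x ∉ convexHull ℝ ↑(W.erase x) := fun hmem =>
    ((convex_convexHull ℝ _).mem_extremePoints_iff_mem_sdiff_convexHull_sdiff.1 hx).2
      (convexHull_mono hsub hmem)
  obtain ⟨h, u, hlt, hu⟩ := geometric_hahn_banach_closed_point (convex_convexHull ℝ _)
    ((W.erase x).finite_toSet.isCompact_convexHull ℝ).isClosed hx'
  exact ⟨h, fun v hv hvx =>
    (hlt v (subset_convexHull ℝ _ (Finset.mem_erase.2 ⟨hvx, hv⟩))).trans hu⟩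

theorem exists_forall_lt_not_factorsAffinelyOn {W : Finset E} {w g h : StrongDual ℝ E}
    {x : E} (hsep : ∀ v ∈ W, v ≠ x → h v < h x) (hg : ¬FactorsAffinelyOn w g W) :
    ∃ h' : StrongDual ℝ E, (∀ v ∈ W, v ≠ x → h' v < h' x) ∧ ¬FactorsAffinelyOn w h' W := by
  have hev : ∀ᶠ δ in 𝓝 (0 : ℝ), ∀ v ∈ W, v ≠ x → h v + δ * g v < h x + δ * g x := by
    refine (eventually_all_finset W).2 fun v hv => ?_
    rcases eq_or_ne v x with rfl | hvx
    · exact Eventually.of_forall fun _ h => (h rfl).elim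
    · have hlt : h v + 0 * g v < h x + 0 * g x := by simpa using hsep v hv hvx
      exact (ContinuousAt.eventually_lt (by fun_prop) (by fun_prop) hlt).mono
        fun _ h _ => h
  obtain ⟨δ, hδ, hδ0⟩ :=
    ((hev.filter_mono nhdsWithin_le_nhds).and self_mem_nhdsWithin).exists (f := 𝓝[≠] (0 : ℝ))
  replace hδ0 : δ ≠ 0 := hδ0
  -- if both `h` and `h + δ • g` were affine in `w`, so would be `g`
  by_cases hh : FactorsAffinelyOn w h W
  · refine ⟨h + δ • g, fun v hv hvx => by simpa using hδ v hv hvx, fun hh' => hg ?_⟩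
    obtain ⟨a, c, hac⟩ := hh
    obtain ⟨a', c', hac'⟩ := hh'
    refine ⟨(a' - a) / δ, (c' - c) / δ, fun v hv => ?_⟩
    have h₁ := hac v hv
    have h₂ := hac' v hv
    simp only [add_apply, smul_apply, smul_eq_mul] at h₂
    field_simp
    linarith
  · exact ⟨h, hsep, hh⟩

theorem exists_supporting_functional_of_not_factorsAffinelyOn {W : Finset E}
    {w h : StrongDual ℝ E} {x y : E} (hsep : ∀ v ∈ W, v ≠ x → h v < h x)
    (hh : ¬FactorsAffinelyOn w h W) (hy : y ∈ W) (hyx : w y < w x) :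
    ∃ f : StrongDual ℝ E, (∀ v ∈ W, f v ≤ f x) ∧ (∃ u ∈ W, f u = f x ∧ w u < w x) ∧
      ∃ v ∈ W, f v ≠ f x := by
  -- tilt `h` by the least slope `(h x - h u) / (w x - w u)` over the `w`-decreasing points `u`
  obtain ⟨u, huT, hu⟩ := (W.filter (w · < w x)).exists_min_image
    (fun v => (h x - h v) / (w x - w v)) ⟨y, Finset.mem_filter.2 ⟨hy, hyx⟩⟩
  obtain ⟨huW, hux⟩ := Finset.mem_filter.1 huT
  set t := (h x - h u) / (w x - w u)
  have ht : 0 < t := div_pos (sub_pos.2 (hsep u huW (ne_of_apply_ne w hux.ne)))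
    (sub_pos.2 hux)
  refine ⟨h - t • w, fun v hv => ?_, ⟨u, huW, ?_, hux⟩, ?_⟩
  · simp only [sub_apply, smul_apply, smul_eq_mul]
    rcases lt_or_ge (w v) (w x) with hvx | hvx
    · have := hu v (Finset.mem_filter.2 ⟨hv, hvx⟩)
      rw [le_div_iff₀ (sub_pos.2 hvx)] at this
      linarith
    · rcases eq_or_ne v x with rfl | hne
      · rfl
      · nlinarith [hsep v hv hne]
  · have : t * (w x - w u) = h x - h u := div_mul_cancel₀ _ (sub_pos.2 hux).ne'
    simp only [sub_apply, smul_apply, smul_eq_mul]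
    linarith
  · by_contra! hall
    exact hh ⟨t, h x - t * w x, fun v hv => by
      have := hall v hv
      simp only [sub_apply, smul_apply, smul_eq_mul] at this
      linarith⟩

theorem exists_improving_edge_of_forall_factorsAffinelyOn {W : Finset E} {w : StrongDual ℝ E}
    {x y : E} (hcol : ∀ g : StrongDual ℝ E, FactorsAffinelyOn w g W)
    (hx : x ∈ (convexHull ℝ ↑W).extremePoints ℝ) (hy : y ∈ W) (hyx : w y < w x) :
    ∃ v ∈ (convexHull ℝ ↑W).extremePoints ℝ, w v < w x ∧
      IsExtreme ℝ (convexHull ℝ ↑W) (segment ℝ x v) := by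
  obtain ⟨u, huW, hu⟩ := W.exists_min_image w ⟨y, hy⟩
  obtain ⟨m, hmW, hm⟩ := W.exists_max_image w ⟨y, hy⟩
  have hxW : x ∈ W := extremePoints_convexHull_subset hx
  have hux : w u < w x := (hu y hy).trans_lt hyx
  have hum : 0 < w m - w u := sub_pos.2 (hux.trans_le (hm x hxW))
  have hline : ∀ v ∈ W, v = AffineMap.lineMap u m ((w v - w u) / (w m - w u)) := by
    intro v hv
    refine (SeparatingDual.eq_iff_forall_dual_eq (R := ℝ)).2 fun g => ?_
    obtain ⟨a, c, hac⟩ := hcol g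
    simp only [AffineMap.lineMap_apply_module, map_add, map_smul, smul_eq_mul,
      hac v hv, hac u huW, hac m hmW]
    field_simp
    ring
  have hseg : convexHull ℝ ↑W = segment ℝ u m := by
    refine subset_antisymm (convexHull_min (fun v hv => ?_) (convex_segment u m))
      (segment_subset_convexHull huW hmW)
    rw [hline v hv, segment_eq_image_lineMap]
    exact Set.mem_image_of_mem _ ⟨div_nonneg (sub_nonneg.2 (hu v hv)) hum.le,
      div_le_one_of_le₀ (sub_le_sub_right (hm v hv) _) hum.le⟩
  have hxm : x = m := by
    rw [hseg, ← convexHull_pair] at hx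
    exact (extremePoints_convexHull_subset hx).resolve_left (ne_of_apply_ne w hux.ne')
  have hu_ext : u ∈ (convexHull ℝ ↑W).extremePoints ℝ := by
    have hface := isExtreme_convexHull_filter W (f := -w) (M := -w u)
      (fun v hv => neg_le_neg (hu v hv))
    have hfilter : W.filter (fun v => (-w) v = -w u) = {u} := by
      ext v
      simp only [Finset.mem_filter, Finset.mem_singleton, neg_apply, neg_inj]
      refine ⟨fun ⟨hv, hwv⟩ => ?_, by rintro rfl; exact ⟨huW, rfl⟩⟩
      rw [hline v hv, hwv, sub_self, zero_div, AffineMap.lineMap_apply_zero]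
    rwa [hfilter, Finset.coe_singleton, convexHull_singleton, isExtreme_singleton] at hface
  refine ⟨u, hu_ext, hux, ?_⟩
  rw [hseg, hxm, segment_symm]

theorem exists_improving_edge (W : Finset E) (w : StrongDual ℝ E) {x y : E}
    (hx : x ∈ (convexHull ℝ ↑W).extremePoints ℝ) (hy : y ∈ W) (hyx : w y < w x) :
    ∃ v ∈ (convexHull ℝ ↑W).extremePoints ℝ, w v < w x ∧
      IsExtreme ℝ (convexHull ℝ ↑W) (segment ℝ x v) := by
  induction W using Finset.strongInduction generalizing y with
  | H W ih =>
  by_cases hcol : ∀ g : StrongDual ℝ E, FactorsAffinelyOn w g W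
  · exact exists_improving_edge_of_forall_factorsAffinelyOn hcol hx hy hyx
  obtain ⟨g, hg⟩ := not_forall.1 hcol
  obtain ⟨h₀, hsep₀⟩ := exists_forall_lt_of_mem_extremePoints_convexHull hx
  obtain ⟨h, hsep, hh⟩ := exists_forall_lt_not_factorsAffinelyOn hsep₀ hg
  obtain ⟨f, hfx, ⟨u, huW, hfu, hux⟩, v₀, hv₀W, hfv₀⟩ :=
    exists_supporting_functional_of_not_factorsAffinelyOn hsep hh hy hyx
  have hface := isExtreme_convexHull_filter W hfx
  have hxW : x ∈ W := extremePoints_convexHull_subset hx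
  have hx' : x ∈ (convexHull ℝ ↑(W.filter (f · = f x))).extremePoints ℝ := by
    rw [hface.extremePoints_eq]
    exact ⟨subset_convexHull ℝ _ (Finset.mem_filter.2 ⟨hxW, rfl⟩), hx⟩
  obtain ⟨v, hv, hvx, hedge⟩ := ih _ (Finset.filter_ssubset.2 ⟨v₀, hv₀W, hfv₀⟩) hx'
    (Finset.mem_filter.2 ⟨huW, hfu⟩) hux
  exact ⟨v, hface.extremePoints_subset_extremePoints hv, hvx, hface.trans hedge⟩

end Polytope

theorem isExtreme_convexHull_filter_forall_eq_zero {ι : Type*} [Fintype ι]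
    (V : Finset (ι → ℝ)) (hV : ∀ v ∈ V, 0 ≤ v) (Z : Finset ι)
    [DecidablePred fun v : ι → ℝ => ∀ a ∈ Z, v a = 0] :
    IsExtreme ℝ (convexHull ℝ ↑V)
      (convexHull ℝ (↑(V.filter fun v => ∀ a ∈ Z, v a = 0) : Set (ι → ℝ))) := by
  set f : StrongDual ℝ (ι → ℝ) := -∑ a ∈ Z, ContinuousLinearMap.proj a
  have hf : ∀ v, f v = -∑ a ∈ Z, v a := fun v => by simp [f]
  have hface := isExtreme_convexHull_filter V (f := f) (M := 0) fun v hv => by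
    simpa [hf] using Finset.sum_nonneg fun a _ => hV v hv a
  rwa [Finset.filter_congr fun v hv => by
    rw [hf, neg_eq_zero, Finset.sum_eq_zero_iff_of_nonneg fun a _ => hV v hv a]] at hface

theorem exists_support_exchange_of_sub_eq_smul {ι : Type*} [DecidableEq ι] {x v : ι → ℝ}
    (hx : ∀ l, x l = 0 ∨ x l = 1) (hv : ∀ l, v l = 0 ∨ v l = 1) {a b : ι} (hab : a ≠ b)
    {c : ℝ} (hvx : v - x = c • (Pi.single a 1 - Pi.single b 1)) {i : ι} (hxi : x i = 1)
    (hvi : v i = 0) :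
    ∃ j, x j = 0 ∧ v j = 1 ∧ {l | v l = 1} = insert j ({l | x l = 1} \ {i}) := by
  wlog hia : i = a generalizing a b c
  · have hib : i = b := by
      by_contra hib
      have := congrFun hvx i
      simp [hia, hib, hxi, hvi] at this
    exact this hab.symm (c := -c) (by rw [hvx]; module) hib
  subst hia
  have hcoord :
      ∀ l, v l = x l + c * ((Pi.single i 1 : ι → ℝ) l - (Pi.single b 1 : ι → ℝ) l) :=
    fun l => by simpa [sub_eq_iff_eq_add'] using congrFun hvx l
  have hc : c = -1 := by linarith [show v i = x i + c by simpa [hab] using hcoord i]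
  have hb : v b = x b + 1 := by simpa [hab.symm, hc] using hcoord b
  have hxb : x b = 0 := by rcases hx b with h | h <;> rcases hv b with h' | h' <;> linarith
  refine ⟨b, hxb, by linarith, Set.ext fun l => ?_⟩
  rcases eq_or_ne l i with rfl | hli
  · simp [hvi, hab]
  rcases eq_or_ne l b with rfl | hlb
  · simp [hb, hxb]
  simp [hcoord l, hli, hlb]

theorem edges_parallel_root_directions_implies_base_exchange_general
    (n : ℕ) (V : Finset (Fin n → ℝ))
    (h01 : ∀ v ∈ V, ∀ i, v i = 0 ∨ v i = 1)
    (P : Set (Fin n → ℝ)) (hP : P = convexHull ℝ (V : Set (Fin n → ℝ)))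
    (hedge : ∀ x y : Fin n → ℝ, x ≠ y → IsExtreme ℝ P (segment ℝ x y) →
      ∃ i j : Fin n, i ≠ j ∧ ∃ c : ℝ,
        y - x = c • ((Pi.single i 1 : Fin n → ℝ) - Pi.single j 1)) :
    ∀ x ∈ P.extremePoints ℝ, ∀ y ∈ P.extremePoints ℝ,
      ∀ i ∈ {i : Fin n | x i = 1} \ {i : Fin n | y i = 1},
        ∃ j ∈ {i : Fin n | y i = 1} \ {i : Fin n | x i = 1},
          ∃ z ∈ P.extremePoints ℝ,
            {i : Fin n | z i = 1} = insert j ({i : Fin n | x i = 1} \ {i}) := by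
  subst hP
  rintro x hx y hy i ⟨hxi : x i = 1, hyi : y i ≠ 1⟩
  have hxV : x ∈ V := extremePoints_convexHull_subset hx
  have hyV : y ∈ V := extremePoints_convexHull_subset hy
  replace hyi : y i = 0 := (h01 y hyV i).resolve_right hyi
  set F := V.filter fun v => ∀ a ∈ Finset.univ.filter (fun a => x a = 0 ∧ y a = 0), v a = 0
  have hF : IsExtreme ℝ (convexHull ℝ ↑V) (convexHull ℝ (F : Set (Fin n → ℝ))) :=
    isExtreme_convexHull_filter_forall_eq_zero V
      (fun v hv a => by rcases h01 v hv a with h | h <;> simp [h]) _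
  have hxF : x ∈ F := Finset.mem_filter.2 ⟨hxV, by simp +contextual⟩
  have hyF : y ∈ F := Finset.mem_filter.2 ⟨hyV, by simp +contextual⟩
  have hx' : x ∈ (convexHull ℝ (F : Set (Fin n → ℝ))).extremePoints ℝ := by
    rw [hF.extremePoints_eq]
    exact ⟨subset_convexHull ℝ _ hxF, hx⟩
  obtain ⟨v, hvF, hvi, hxv⟩ := exists_improving_edge F (ContinuousLinearMap.proj i) hx' hyF
    (by simp [hxi, hyi])
  obtain ⟨hvV, hvZ⟩ := Finset.mem_filter.1 (extremePoints_convexHull_subset hvF)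
  obtain ⟨a, b, hab, c, hc⟩ := hedge x v (ne_of_apply_ne (· i) (by simpa using hvi.ne'))
    (hF.trans hxv)
  obtain ⟨j, hxj, hvj, hsupp⟩ := exists_support_exchange_of_sub_eq_smul (h01 x hxV)
    (h01 v hvV) hab hc hxi ((h01 v hvV i).resolve_right (by simpa [hxi] using hvi.ne))
  have hyj : y j = 1 := (h01 y hyV j).resolve_left fun hyj =>
    by simpa [hvj] using hvZ j (by simp [hxj, hyj])
  exact ⟨j, ⟨hyj, by simp [hxj]⟩, v, hF.extremePoints_subset_extremePoints hvF, hsupp⟩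

/-- If `V ⊆ {0,1}ⁿ` is a nonempty finite set of 0/1 vectors, each with
exactly `k` ones, and every edge of `P = conv(V)` is parallel to some `e_i - e_j`, then
the supports of the vertices of `P` satisfy the matroid base exchange axiom. -/
theorem edges_parallel_root_directions_implies_base_exchange
    (n k : ℕ) (V : Finset (Fin n → ℝ)) (hne : V.Nonempty)
    (h01 : ∀ v ∈ V, ∀ i, v i = 0 ∨ v i = 1)
    (hk : ∀ v ∈ V, (Finset.univ.filter fun i => v i = 1).card = k)
    (P : Set (Fin n → ℝ)) (hP : P = convexHull ℝ (V : Set (Fin n → ℝ)))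
    (hedge : ∀ x y : Fin n → ℝ, x ≠ y → IsExtreme ℝ P (segment ℝ x y) →
      ∃ i j : Fin n, i ≠ j ∧ ∃ c : ℝ,
        y - x = c • ((Pi.single i 1 : Fin n → ℝ) - Pi.single j 1)) :
    ∀ x ∈ P.extremePoints ℝ, ∀ y ∈ P.extremePoints ℝ,
      ∀ i ∈ {i : Fin n | x i = 1} \ {i : Fin n | y i = 1},
        ∃ j ∈ {i : Fin n | y i = 1} \ {i : Fin n | x i = 1},
          ∃ z ∈ P.extremePoints ℝ,
            {i : Fin n | z i = 1} = insert j ({i : Fin n | x i = 1} \ {i}) :=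
  edges_parallel_root_directions_implies_base_exchange_general n V h01 P hP hedge
end

section
/- Let n ≥ 1. The extreme points of the permutohedron P_n ⊆ ℝ^n are exactly the n! permutation vectors (σ(1), ..., σ(n)), σ a permutation of {1, ..., n}; in particular distinct permutations give distinct extreme points. -/
open Finset

/-- If a linear functional `y ↦ ∑ i, c i * y i` is strictly maximized on a finite set `s`
at `x ∈ s`, then `x` is an extreme point of the convex hull of `s`. -/
lemma extreme_of_strict_max {m : ℕ} (s : Set (Fin m → ℝ)) (hs : s.Finite)
    (x : Fin m → ℝ) (hx : x ∈ s) (c : Fin m → ℝ)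
    (hlt : ∀ y ∈ s, y ≠ x → ∑ i, c i * y i < ∑ i, c i * x i) :
    x ∈ (convexHull ℝ s).extremePoints ℝ := by
  set l : (Fin m → ℝ) → ℝ := fun y => ∑ i, c i * y i with hl
  have hxt : x ∈ hs.toFinset := hs.mem_toFinset.2 hx
  have key : ∀ y ∈ convexHull ℝ s, l y ≤ l x ∧ (l y = l x → y = x) := by
    intro y hy
    rw [hs.convexHull_eq] at hy
    obtain ⟨w, hw0, hw1, hwc⟩ := hy
    have hw0' : ∀ p ∈ hs.toFinset, 0 ≤ w p := fun p hp => hw0 p (hs.mem_toFinset.1 hp)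
    have hy' : y = ∑ p ∈ hs.toFinset, w p • p := by
      rw [← hwc, Finset.centerMass_eq_of_sum_1 _ id hw1]
      rfl
    have hly : l y = ∑ p ∈ hs.toFinset, w p * l p := by
      rw [hy']
      simp only [hl, Finset.sum_apply, Pi.smul_apply, smul_eq_mul, Finset.mul_sum]
      rw [Finset.sum_comm]
      exact Finset.sum_congr rfl fun p _ => Finset.sum_congr rfl fun i _ => by ring
    have hle : ∀ p ∈ hs.toFinset, w p * l p ≤ w p * l x := by
      intro p hp
      rcases eq_or_ne p x with rfl | hne
      · exact le_rfl
      · exact mul_le_mul_of_nonneg_left (hlt p (hs.mem_toFinset.1 hp) hne).le (hw0' p hp)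
    have hsum : ∑ p ∈ hs.toFinset, w p * l x = l x := by
      rw [← Finset.sum_mul, hw1, one_mul]
    constructor
    · rw [hly, ← hsum]
      exact Finset.sum_le_sum hle
    · intro heq
      have hzero : ∀ p ∈ hs.toFinset, p ≠ x → w p = 0 := by
        intro p hp hne
        by_contra h
        have hwp : 0 < w p := lt_of_le_of_ne (hw0' p hp) (Ne.symm h)
        have hstrict : ∑ q ∈ hs.toFinset, w q * l q < ∑ q ∈ hs.toFinset, w q * l x :=
          Finset.sum_lt_sum hle ⟨p, hp,
            mul_lt_mul_of_pos_left (hlt p (hs.mem_toFinset.1 hp) hne) hwp⟩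
        rw [← hly, hsum, heq] at hstrict
        exact lt_irrefl _ hstrict
      have hwx : w x = 1 := by
        rw [← hw1]
        exact (Finset.sum_eq_single_of_mem x hxt (fun p hp hne => hzero p hp hne)).symm
      rw [hy', Finset.sum_eq_single_of_mem x hxt
        (fun p hp hne => by rw [hzero p hp hne, zero_smul]), hwx, one_smul]
  rw [mem_extremePoints]
  refine ⟨subset_convexHull ℝ s hx, ?_⟩
  intro x₁ h₁ x₂ h₂ hseg
  obtain ⟨a, b, ha, hb, hab, hx'⟩ := hseg
  have k1 := key x₁ h₁
  have k2 := key x₂ h₂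
  have hlx : l x = a * l x₁ + b * l x₂ := by
    rw [← hx']
    simp only [hl, Pi.add_apply, Pi.smul_apply, smul_eq_mul]
    rw [Finset.mul_sum, Finset.mul_sum, ← Finset.sum_add_distrib]
    apply Finset.sum_congr rfl
    intro i _
    ring
  have h0 : a * (l x - l x₁) + b * (l x - l x₂) = 0 := by linear_combination l x * hab + hlx
  have hd1 : l x₁ = l x := by
    by_contra h
    have hgt : 0 < l x - l x₁ := lt_of_le_of_ne (sub_nonneg.2 k1.1) (fun e => h (by linarith))
    have h1' := mul_pos ha hgt
    have h2' := mul_nonneg hb.le (sub_nonneg.2 k2.1)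
    linarith
  have hd2 : l x₂ = l x := by
    by_contra h
    have hgt : 0 < l x - l x₂ := lt_of_le_of_ne (sub_nonneg.2 k2.1) (fun e => h (by linarith))
    have h2' := mul_pos hb hgt
    have h1' := mul_nonneg ha.le (sub_nonneg.2 k1.1)
    linarith
  exact ⟨k1.2 hd1, k2.2 hd2⟩

/-- The extreme points of the permutohedron `Pₙ ⊆ ℝⁿ` are exactly the
`n!` permutation vectors `(σ(1), …, σ(n))`; distinct permutations give distinct
extreme points. -/
theorem permutohedron_extremePoints
    (n : ℕ) (hn : 1 ≤ n)
    (perms : Set (Fin n → ℝ))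
    (hperms : perms =
      {x : Fin n → ℝ | ∃ σ : Equiv.Perm (Fin n), x = fun i => ((σ i : ℕ) : ℝ) + 1}) :
    (convexHull ℝ perms).extremePoints ℝ = perms ∧
    Function.Injective (fun σ : Equiv.Perm (Fin n) => fun i => ((σ i : ℕ) : ℝ) + 1) := by
  have hfin : perms.Finite := by
    rw [hperms]
    have : {x : Fin n → ℝ | ∃ σ : Equiv.Perm (Fin n), x = fun i => ((σ i : ℕ) : ℝ) + 1} =
        Set.range (fun σ : Equiv.Perm (Fin n) => fun i => ((σ i : ℕ) : ℝ) + 1) := by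
      ext x; simp [eq_comm]
    rw [this]
    exact Set.finite_range _
  constructor
  · apply Set.Subset.antisymm extremePoints_convexHull_subset
    intro x hx
    rw [hperms] at hx
    obtain ⟨σ, rfl⟩ := hx
    apply extreme_of_strict_max perms hfin _ (by rw [hperms]; exact ⟨σ, rfl⟩)
      (fun i => ((σ i : ℕ) : ℝ) + 1)
    intro y hy hne
    rw [hperms] at hy
    obtain ⟨τ, rfl⟩ := hy
    set c : Fin n → ℝ := fun i => ((σ i : ℕ) : ℝ) + 1 with hc
    set t : Fin n → ℝ := fun i => ((τ i : ℕ) : ℝ) + 1 with ht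
    have hsame : ∑ i, t i ^ 2 = ∑ i, c i ^ 2 := by
      rw [hc, ht]
      rw [Equiv.sum_comp τ (fun j => (((j : ℕ) : ℝ) + 1) ^ 2),
        Equiv.sum_comp σ (fun j => (((j : ℕ) : ℝ) + 1) ^ 2)]
    have hpos : 0 < ∑ i, (c i - t i) ^ 2 := by
      have hne' : ∃ i, t i ≠ c i := by
        by_contra h
        push_neg at h
        exact hne (funext h)
      obtain ⟨i, hi⟩ := hne'
      apply Finset.sum_pos' (fun j _ => sq_nonneg _) ⟨i, Finset.mem_univ i, ?_⟩
      have : c i - t i ≠ 0 := sub_ne_zero.2 (Ne.symm hi)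
      positivity
    have hexp : ∑ i, (c i - t i) ^ 2 =
        ∑ i, c i ^ 2 - 2 * ∑ i, c i * t i + ∑ i, t i ^ 2 := by
      have h' : ∀ i : Fin n, (c i - t i) ^ 2 = c i ^ 2 - 2 * (c i * t i) + t i ^ 2 :=
        fun i => by ring
      rw [Finset.sum_congr rfl fun i _ => h' i, Finset.sum_add_distrib,
        Finset.sum_sub_distrib, ← Finset.mul_sum]
    have hg1 : ∑ i, c i * t i < ∑ i, c i ^ 2 := by linarith
    have hc2 : ∑ i, c i * c i = ∑ i, c i ^ 2 :=
      Finset.sum_congr rfl fun i _ => by ring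
    calc ∑ i, c i * t i < ∑ i, c i ^ 2 := hg1
      _ = ∑ i, c i * c i := hc2.symm
  · intro σ τ h
    apply Equiv.ext
    intro i
    have := congrFun h i
    simp only at this
    have hval : ((σ i : ℕ) : ℝ) = ((τ i : ℕ) : ℝ) := by linarith
    exact Fin.ext (Nat.cast_injective hval)
end

section
/- Let P = conv(S) ⊆ ℝ^n for a nonempty finite set S, and suppose every edge of P is parallel to e_i - e_j for some i ≠ j. Then the coordinate sum functional is constant on P: there exists t ∈ ℝ such that ∑_{i=1}^n x_i = t for all x ∈ P. In particular every generalized permutohedron lies in a hyperplane {x : ∑_i x_i = t}. -/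
/-!
The coordinate sum vanishes on every `e_i - e_j`, so it suffices that a linear functional `f`
which is not constant on a polytope `P` is not constant on some edge of `P`. Induct on the number
of vertices: a polytope with two vertices is its own edge. Otherwise let `w` be a vertex
minimising `f` and `h` a functional exposing `w`. The smallest `t` for which `f + t • h` is
maximised at `w` gives a face through `w` and a vertex where `f` is larger. If that face is all
of `P`, then `f` is strictly decreasing in `h` on the vertices, and any proper face through `w`
and another vertex (obtained by tilting a functional exposing a second vertex) will do. Edges of
a face are edges of `P`, so the induction hypothesis applies to the proper face.
-/

open Set

lemma exists_tilt_max_at {α : Type*} {E : Set α} (hE : E.Finite) {w : α} (h k : α → ℝ)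
    (hh : ∀ s ∈ E, s ≠ w → h s < h w) {u : α} (hu : u ∈ E) (hku : k w < k u) :
    ∃ t > 0, ∃ s₀ ∈ E, k w < k s₀ ∧ k s₀ + t * h s₀ = k w + t * h w ∧
      ∀ s ∈ E, k s + t * h s ≤ k w + t * h w := by
  have huw : u ≠ w := by rintro rfl; exact hku.false
  obtain ⟨s₀, ⟨hs₀E, hs₀w⟩, hmax⟩ := (E \ {w}).exists_max_image
    (fun s => (k s - k w) / (h w - h s)) hE.sdiff ⟨u, hu, huw⟩
  have hgap : ∀ s ∈ E, s ≠ w → 0 < h w - h s := fun s hs hsw => sub_pos.2 (hh s hs hsw)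
  -- `t` is the steepest slope `(k s - k w) / (h w - h s)` over `s ≠ w`.
  set t := (k s₀ - k w) / (h w - h s₀)
  have ht : 0 < t := (div_pos (sub_pos.2 hku) (hgap u hu huw)).trans_le (hmax u ⟨hu, huw⟩)
  have hts₀ : k s₀ - k w = t * (h w - h s₀) := by
    rw [div_mul_cancel₀ _ (hgap s₀ hs₀E hs₀w).ne']
  refine ⟨t, ht, s₀, hs₀E, ?_, by linarith, fun s hs => ?_⟩
  · nlinarith [hgap s₀ hs₀E hs₀w]
  · rcases eq_or_ne s w with rfl | hsw
    · rfl
    have := (div_le_iff₀ (hgap s hs hsw)).1 (hmax s ⟨hs, hsw⟩)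
    linarith

variable {V : Type*} [NormedAddCommGroup V] [NormedSpace ℝ V]

lemma exists_proper_face_through {E : Set V} (hE : E.Finite) (hE3 : 2 < E.ncard)
    (hexp : ∀ w ∈ E, ∃ h : StrongDual ℝ V, ∀ s ∈ E, s ≠ w → h s < h w) {w : V} (hw : w ∈ E) :
    ∃ g : StrongDual ℝ V, ∃ s ∈ E, s ≠ w ∧ g s = g w ∧
      (∀ s ∈ E, g s ≤ g w) ∧ ∃ e ∈ E, g e < g w := by
  obtain ⟨h, hh⟩ := hexp w hw
  -- `u₂` is not the unique minimiser of `h` on `E \ {w}`, so no tilt `k + t • h` of a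
  -- functional `k` exposing `u₂` is constant on `E`.
  obtain ⟨u₁, u₂, ⟨hu₁, hu₁w⟩, ⟨hu₂, hu₂w⟩, hu₁₂, hhu⟩ :
      ∃ u₁ u₂, u₁ ∈ E \ {w} ∧ u₂ ∈ E \ {w} ∧ u₁ ≠ u₂ ∧ h u₁ ≤ h u₂ := by
    have : 1 < (E \ {w}).ncard := by rw [ncard_sdiff_singleton_of_mem hw]; omega
    obtain ⟨a, b, ha, hb, hab⟩ := (one_lt_ncard_iff hE.sdiff).1 this
    rcases le_total (h a) (h b) with hle | hle
    · exact ⟨a, b, ha, hb, hab, hle⟩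
    · exact ⟨b, a, hb, ha, hab.symm, hle⟩
  obtain ⟨k, hk⟩ := hexp u₂ hu₂
  have hkw := hk w hw (Ne.symm hu₂w)
  obtain ⟨t, -, s, hs, hks, heq, hle⟩ := exists_tilt_max_at hE h k hh hu₂ hkw
  refine ⟨k + t • h, s, hs, by rintro rfl; exact hks.false, by simpa using heq,
    fun s hs => by simpa using hle s hs, ?_⟩
  by_contra! hconst
  have e₁ := le_antisymm (hle u₁ hu₁) (by simpa using hconst u₁ hu₁)
  have e₂ := le_antisymm (hle u₂ hu₂) (by simpa using hconst u₂ hu₂)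
  have := hk u₁ hu₁ hu₁₂
  have := hh u₂ hu₂ hu₂w
  have ht : 0 < t := by nlinarith
  nlinarith

lemma exists_proper_face_apply_ne {E : Set V} (hE : E.Finite) (hE3 : 2 < E.ncard)
    (hexp : ∀ w ∈ E, ∃ h : StrongDual ℝ V, ∀ s ∈ E, s ≠ w → h s < h w)
    (f : StrongDual ℝ V) {x y : V} (hx : x ∈ E) (hy : y ∈ E) (hxy : f x ≠ f y) :
    ∃ g : StrongDual ℝ V, ∃ a ∈ E, ∃ b ∈ E, f a ≠ f b ∧ g b = g a ∧
      (∀ s ∈ E, g s ≤ g a) ∧ ∃ e ∈ E, g e < g a := by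
  obtain ⟨w, hw, hwmin⟩ := E.exists_min_image f hE ⟨x, hx⟩
  obtain ⟨h, hh⟩ := hexp w hw
  obtain ⟨u, hu, hfu⟩ : ∃ u ∈ E, f w < f u := by
    rcases (hwmin x hx).lt_or_eq with hlt | heq
    · exact ⟨x, hx, hlt⟩
    · exact ⟨y, hy, (hwmin y hy).lt_of_ne (heq ▸ hxy)⟩
  obtain ⟨t, ht, s, hs, hfs, heq, hle⟩ := exists_tilt_max_at hE h f hh hu hfu
  by_cases hproper : ∃ e ∈ E, f e + t * h e < f w + t * h w
  · obtain ⟨e, he, hlt⟩ := hproper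
    exact ⟨f + t • h, w, hw, s, hs, hfs.ne, by simpa using heq,
      fun s hs => by simpa using hle s hs, e, he, by simpa using hlt⟩
  -- Now `f + t • h` is constant on `E`, so `f` separates `w` from every other point of `E`.
  push Not at hproper
  obtain ⟨g, s', hs', hs'w, hgs', hgle, e, he, hlt⟩ := exists_proper_face_through hE hE3 hexp hw
  refine ⟨g, w, hw, s', hs', ?_, hgs', hgle, e, he, hlt⟩
  nlinarith [hh s' hs' hs'w, hproper s' hs', hle s' hs']

lemma apply_le_of_forall_extremePoints_apply_le {P : Set V} (hPc : IsCompact P)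
    (hPcv : Convex ℝ P) (g : StrongDual ℝ V) {M : ℝ}
    (hM : ∀ e ∈ P.extremePoints ℝ, g e ≤ M) {x : V} (hx : x ∈ P) : g x ≤ M := by
  rw [← closure_convexHull_extremePoints hPc hPcv] at hx
  exact closure_minimal (convexHull_min hM (convex_halfSpace_le g.isLinear M))
    (isClosed_le g.continuous continuous_const) hx

lemma apply_eq_of_forall_extremePoints_apply_eq {P : Set V} (hPc : IsCompact P)
    (hPcv : Convex ℝ P) (g : StrongDual ℝ V) {M : ℝ}
    (hM : ∀ e ∈ P.extremePoints ℝ, g e = M) {x : V} (hx : x ∈ P) : g x = M :=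
  le_antisymm (apply_le_of_forall_extremePoints_apply_le hPc hPcv g (fun e he => (hM e he).le) hx)
    (neg_le_neg_iff.1 <| apply_le_of_forall_extremePoints_apply_le hPc hPcv (-g)
      (fun e he => by simp [hM e he]) hx)

lemma eq_segment_of_extremePoints_eq_pair {P : Set V} (hPc : IsCompact P)
    (hPcv : Convex ℝ P) {x y : V} (h : P.extremePoints ℝ = {x, y}) :
    P = segment ℝ x y := by
  rw [← closure_convexHull_extremePoints hPc hPcv, h,
    ((toFinite {x, y}).isCompact_convexHull ℝ).isClosed.closure_eq, convexHull_pair]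

lemma exists_forall_lt_of_mem_extremePoints {P A : Set V} (hPcv : Convex ℝ P) {w : V}
    (hw : w ∈ P.extremePoints ℝ) (hA : A.Finite) (hAP : A ⊆ P) (hwA : w ∉ A) :
    ∃ h : StrongDual ℝ V, ∀ a ∈ A, h a < h w := by
  have hw' : w ∉ convexHull ℝ A := fun hmem =>
    hwA <| extremePoints_convexHull_subset <|
      inter_extremePoints_subset_extremePoints_of_subset (convexHull_min hAP hPcv) ⟨hmem, hw⟩
  obtain ⟨h, r, hA, hr⟩ := geometric_hahn_banach_closed_point (convex_convexHull ℝ A)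
    (hA.isCompact_convexHull ℝ).isClosed hw'
  exact ⟨h, fun a ha => (hA a (subset_convexHull ℝ A ha)).trans hr⟩

theorem exists_isExtreme_segment_apply_ne {P : Set V} (hPc : IsCompact P) (hPcv : Convex ℝ P)
    (hfin : (P.extremePoints ℝ).Finite) (f : StrongDual ℝ V) {x y : V}
    (hx : x ∈ P.extremePoints ℝ) (hy : y ∈ P.extremePoints ℝ) (hxy : f x ≠ f y) :
    ∃ a b, a ≠ b ∧ IsExtreme ℝ P (segment ℝ a b) ∧ f a ≠ f b := by
  induction hn : (P.extremePoints ℝ).ncard using Nat.strong_induction_on generalizing P x y with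
  | _ n ih =>
  by_cases hpair : P.extremePoints ℝ ⊆ {x, y}
  · have hP := eq_segment_of_extremePoints_eq_pair hPc hPcv
      (hpair.antisymm (insert_subset hx (singleton_subset_iff.2 hy)))
    exact ⟨x, y, ne_of_apply_ne f hxy, hP ▸ IsExtreme.rfl, hxy⟩
  obtain ⟨z, hz, hzxy⟩ := not_subset.1 hpair
  have h3 : 2 < (P.extremePoints ℝ).ncard := (two_lt_ncard hfin).2
    ⟨x, hx, y, hy, z, hz, ne_of_apply_ne f hxy, fun h => hzxy (by simp [h]),
      fun h => hzxy (by simp [h])⟩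
  have hexp : ∀ w ∈ P.extremePoints ℝ, ∃ h : StrongDual ℝ V,
      ∀ s ∈ P.extremePoints ℝ, s ≠ w → h s < h w := fun w hw =>
    (exists_forall_lt_of_mem_extremePoints (A := P.extremePoints ℝ \ {w}) hPcv hw hfin.sdiff
      (sdiff_subset.trans extremePoints_subset) fun h => h.2 rfl).imp
      fun h hh s hs hsw => hh s ⟨hs, hsw⟩
  obtain ⟨g, a, ha, b, hb, hfab, hgb, hle, e, he, hlt⟩ :=
    exists_proper_face_apply_ne hfin h3 hexp f hx hy hxy
  have hF : IsExposed ℝ P (g.toExposed P) := ContinuousLinearMap.toExposed.isExposed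
  have hextF := hF.isExtreme.extremePoints_eq
  have hmem : ∀ c ∈ P.extremePoints ℝ, g c = g a → c ∈ (g.toExposed P).extremePoints ℝ :=
    fun c hc hgc => hextF ▸ ⟨⟨extremePoints_subset hc,
      fun p hp => hgc ▸ apply_le_of_forall_extremePoints_apply_le hPc hPcv g hle hp⟩, hc⟩
  have hcard : ((g.toExposed P).extremePoints ℝ).ncard < n := hn ▸ ncard_lt_ncard
    ((ssubset_iff_of_subset hF.isExtreme.extremePoints_subset_extremePoints).2
      ⟨e, he, fun heF => hlt.not_ge (heF.1.2 a (extremePoints_subset ha))⟩) hfin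
  obtain ⟨c, d, hcd, hext, hfcd⟩ := ih _ hcard (hF.isCompact hPc) (hF.convex hPcv)
    (hfin.subset hF.isExtreme.extremePoints_subset_extremePoints) (hmem a ha rfl) (hmem b hb hgb)
    hfab rfl
  exact ⟨c, d, hcd, hF.isExtreme.trans hext, hfcd⟩

/-- If every edge of the polytope `P = conv(S)` is parallel to some
`e_i - e_j` with `i ≠ j`, then the coordinate sum functional is constant on `P`: there is
`t ∈ ℝ` with `∑ᵢ xᵢ = t` for all `x ∈ P`. -/
theorem generalized_permutohedron_lies_in_hyperplane
    (n : ℕ) (S : Finset (Fin n → ℝ)) (hS : S.Nonempty)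
    (P : Set (Fin n → ℝ)) (hP : P = convexHull ℝ (S : Set (Fin n → ℝ)))
    (hedge : ∀ x y : Fin n → ℝ, x ≠ y → IsExtreme ℝ P (segment ℝ x y) →
      ∃ i j : Fin n, i ≠ j ∧ ∃ c : ℝ,
        y - x = c • ((Pi.single i 1 : Fin n → ℝ) - Pi.single j 1)) :
    ∃ t : ℝ, ∀ x ∈ P, ∑ i, x i = t := by
  let φ : StrongDual ℝ (Fin n → ℝ) := ∑ i, ContinuousLinearMap.proj i
  have hφ : ∀ x, φ x = ∑ i, x i := fun x => by simp [φ]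
  have hPc : IsCompact P := hP ▸ S.finite_toSet.isCompact_convexHull ℝ
  have hPcv : Convex ℝ P := hP ▸ convex_convexHull ℝ _
  have hconst : ∀ x ∈ P.extremePoints ℝ, ∀ y ∈ P.extremePoints ℝ, φ x = φ y := by
    by_contra! ⟨x, hx, y, hy, hxy⟩
    obtain ⟨a, b, hab, hext, hφab⟩ := exists_isExtreme_segment_apply_ne hPc hPcv
      (S.finite_toSet.subset (hP ▸ extremePoints_convexHull_subset)) φ hx hy hxy
    obtain ⟨i, j, -, c, hc⟩ := hedge a b hab hext
    refine hφab (sub_eq_zero.1 ?_).symm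
    rw [← map_sub, hc, map_smul, map_sub, hφ, hφ]
    simp
  obtain ⟨e, he⟩ := hPc.extremePoints_nonempty (hP ▸ hS.to_set.convexHull)
  exact ⟨φ e, fun x hx => hφ x ▸
    apply_eq_of_forall_extremePoints_apply_eq hPc hPcv φ (fun y hy => hconst y hy e he) hx⟩
end

section
/- If P and Q are generalized permutohedra in ℝ^n, then their Minkowski sum P + Q = {p + q : p ∈ P, q ∈ Q} is a generalized permutohedron. -/
open scoped Pointwise

/-- A polytope `P ⊆ ℝⁿ` is a generalized permutohedron if every edge `[x,y]` of `P`
(i.e. a segment with distinct endpoints that is an extreme subset of `P`) is parallel to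
`e_i - e_j` for some `i ≠ j`. -/
def IsGeneralizedPermutohedron (n : ℕ) (P : Set (Fin n → ℝ)) : Prop :=
  ∀ x y : Fin n → ℝ, x ≠ y → IsExtreme ℝ P (segment ℝ x y) →
    ∃ i j : Fin n, i ≠ j ∧ ∃ c : ℝ,
      y - x = c • ((Pi.single i 1 : Fin n → ℝ) - Pi.single j 1)

/-! If `[x, y]` is an edge of `P + Q`, write `x = p + q` and `y = p' + q'` with `p, p' ∈ P` and
`q, q' ∈ Q`; by symmetry `p ≠ p'`. The points of `P` that complete, with some point of `Q`, to a
point of `[x, y]` form a convex extreme subset of `P`. It lies in both `[x, y] - q` and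
`[x, y] - q'`, and these two parallel segments meet exactly in `[p, p']`, so `[p, p']` is an edge
of `P`. Finally `p' + q ∈ [x, y]`, so `p' - p` is a nonzero multiple of `y - x`. -/

open Set

section

variable {𝕜 V : Type*} [Field 𝕜] [LinearOrder 𝕜] [IsStrictOrderedRing 𝕜] [AddCommGroup V]
  [Module 𝕜 V] {P Q E : Set V}

theorem segment_inter_segment_translate_subset {x y v : V} (h : v + y ∈ segment 𝕜 x y) :
    segment 𝕜 x y ∩ segment 𝕜 (v + x) (v + y) ⊆ segment 𝕜 x (v + y) := by
  rcases eq_or_ne x y with rfl | hxy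
  · rw [segment_same]
    rintro p ⟨rfl, -⟩
    exact left_mem_segment 𝕜 _ _
  set f : 𝕜 →ᵃ[𝕜] V := AffineMap.lineMap x y
  obtain ⟨a, ⟨ha0, -⟩, ha⟩ : v + y ∈ f '' Icc 0 1 := segment_eq_image_lineMap 𝕜 x y ▸ h
  obtain rfl : v = f a - y := by rw [ha]; abel
  have hx : f 0 = x := AffineMap.lineMap_apply_zero x y
  have hy : f 1 = y := AffineMap.lineMap_apply_one x y
  have hxv : f (a - 1) = f a - y + x := by
    simp only [f, AffineMap.lineMap_apply_module]; module
  rw [sub_add_cancel, ← hxv, ← hx, ← hy, ← image_segment, ← image_segment, ← image_segment,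
    ← image_inter (AffineMap.lineMap_injective 𝕜 hxy)]
  refine image_mono ?_
  rw [segment_eq_Icc zero_le_one, segment_eq_Icc (by linarith), segment_eq_Icc ha0]
  exact fun t ⟨⟨ht0, _⟩, _, hta⟩ ↦ ⟨ht0, hta⟩

theorem IsExtreme.add_mem_of_swapped_add_mem (hE : IsExtreme 𝕜 (P + Q) E)
    (hEc : Convex 𝕜 E) ⦃p p' q q' : V⦄ (hp : p ∈ P) (hp' : p' ∈ P) (hq : q ∈ Q) (hq' : q' ∈ Q)
    (h : p + q' ∈ E) (h' : p' + q ∈ E) : p + q ∈ E := by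
  -- the midpoint of `p + q'` and `p' + q` is also the midpoint of `p + q` and `p' + q'`
  have hmid : (2⁻¹ : 𝕜) • (p + q') + (2⁻¹ : 𝕜) • (p' + q) ∈ E :=
    hEc h h' (by norm_num) (by norm_num) (by norm_num)
  exact hE.left_mem_of_mem_openSegment (add_mem_add hp hq) (add_mem_add hp' hq') hmid
    ⟨2⁻¹, 2⁻¹, by norm_num, by norm_num, by norm_num, by module⟩

def summandFace (P Q E : Set V) : Set V := {p ∈ P | ∃ q ∈ Q, p + q ∈ E}

theorem isExtreme_summandFace (hE : IsExtreme 𝕜 (P + Q) E) :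
    IsExtreme 𝕜 P (summandFace P Q E) := by
  refine ⟨fun p hp ↦ hp.1, ?_⟩
  rintro p₁ hp₁ p₂ hp₂ p ⟨-, q, hq, hpq⟩ hp
  refine ⟨hp₁, q, hq, hE.left_mem_of_mem_openSegment (add_mem_add hp₁ hq) (add_mem_add hp₂ hq)
    hpq ?_⟩
  rw [add_comm p₁, add_comm p₂, add_comm p]
  exact (mem_openSegment_translate 𝕜 q).2 hp

theorem convex_summandFace (hP : Convex 𝕜 P) (hE : IsExtreme 𝕜 (P + Q) E) (hEc : Convex 𝕜 E) :
    Convex 𝕜 (summandFace P Q E) := by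
  rintro p₁ ⟨hp₁, q₁, hq₁, h₁⟩ p₂ ⟨hp₂, q₂, hq₂, h₂⟩ a b ha hb hab
  have h₂₁ : p₂ + q₁ ∈ E := hE.add_mem_of_swapped_add_mem hEc hp₂ hp₁ hq₁ hq₂ h₂ h₁
  refine ⟨hP hp₁ hp₂ ha hb hab, q₁, hq₁, ?_⟩
  convert hEc h₁ h₂₁ ha hb hab using 1
  calc a • p₁ + b • p₂ + q₁ = a • p₁ + b • p₂ + (a + b) • q₁ := by rw [hab, one_smul]
    _ = a • (p₁ + q₁) + b • (p₂ + q₁) := by module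

theorem summandFace_segment_subset {x y px py qx qy : V}
    (hE : IsExtreme 𝕜 (P + Q) (segment 𝕜 x y)) (hpx : px ∈ P) (hpy : py ∈ P) (hqx : qx ∈ Q)
    (hqy : qy ∈ Q) (hx : px + qx = x) (hy : py + qy = y) :
    summandFace P Q (segment 𝕜 x y) ⊆ segment 𝕜 px py := by
  rintro p ⟨hp, q, hq, hpq⟩
  have hswap := hE.add_mem_of_swapped_add_mem (convex_segment x y)
  have hxE : px + qx ∈ segment 𝕜 x y := hx ▸ left_mem_segment 𝕜 x y
  have hyE : py + qy ∈ segment 𝕜 x y := hy ▸ right_mem_segment 𝕜 x y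
  have hpqx : p + qx ∈ segment 𝕜 x y := hswap hp hpx hqx hq hpq hxE
  have hpqy : p + qy ∈ segment 𝕜 x y := hswap hp hpy hqy hq hpq hyE
  have hpyqx : py + qx ∈ segment 𝕜 x y := hswap hpy hpx hqx hqy hyE hxE
  have hshift : qx - qy + y = py + qx := by rw [← hy]; abel
  have hpqx' : qx - qy + (p + qy) ∈ segment 𝕜 x y := by convert hpqx using 1; abel
  have hmem := segment_inter_segment_translate_subset (by rwa [hshift])
    ⟨hpqx', (mem_segment_translate 𝕜 (qx - qy)).2 hpqy⟩
  rw [hshift, ← hx, show qx - qy + (p + qy) = qx + p by abel, add_comm px, add_comm py] at hmem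
  exact (mem_segment_translate 𝕜 qx).1 hmem

theorem isExtreme_segment_of_isExtreme_add_segment {x y px py qx qy : V} (hP : Convex 𝕜 P)
    (hE : IsExtreme 𝕜 (P + Q) (segment 𝕜 x y)) (hpx : px ∈ P) (hpy : py ∈ P) (hqx : qx ∈ Q)
    (hqy : qy ∈ Q) (hx : px + qx = x) (hy : py + qy = y) :
    IsExtreme 𝕜 P (segment 𝕜 px py) := by
  have hpxF : px ∈ summandFace P Q (segment 𝕜 x y) :=
    ⟨hpx, qx, hqx, hx ▸ left_mem_segment 𝕜 x y⟩
  have hpyF : py ∈ summandFace P Q (segment 𝕜 x y) :=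
    ⟨hpy, qy, hqy, hy ▸ right_mem_segment 𝕜 x y⟩
  have hF : summandFace P Q (segment 𝕜 x y) = segment 𝕜 px py :=
    (summandFace_segment_subset hE hpx hpy hqx hqy hx hy).antisymm
      ((convex_summandFace hP hE (convex_segment x y)).segment_subset hpxF hpyF)
  exact hF ▸ isExtreme_summandFace hE

end

theorem IsGeneralizedPermutohedron.exists_sub_eq_smul_of_isExtreme_add {n : ℕ}
    {P Q : Set (Fin n → ℝ)} (hGP : IsGeneralizedPermutohedron n P) (hP : Convex ℝ P)
    {x y px py qx qy : Fin n → ℝ} (hE : IsExtreme ℝ (P + Q) (segment ℝ x y)) (hpx : px ∈ P)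
    (hpy : py ∈ P) (hqx : qx ∈ Q) (hqy : qy ∈ Q) (hx : px + qx = x) (hy : py + qy = y)
    (hne : px ≠ py) :
    ∃ i j : Fin n, i ≠ j ∧ ∃ c : ℝ,
      y - x = c • ((Pi.single i 1 : Fin n → ℝ) - Pi.single j 1) := by
  have hpyqx : py + qx ∈ segment ℝ x y :=
    hE.add_mem_of_swapped_add_mem (convex_segment x y) hpy hpx hqx hqy
      (hy ▸ right_mem_segment ℝ x y) (hx ▸ left_mem_segment ℝ x y)
  obtain ⟨a, -, ha⟩ : ∃ a ∈ Icc (0 : ℝ) 1, x + a • (y - x) = py + qx := by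
    rwa [segment_eq_image'] at hpyqx
  have hdir : py - px = a • (y - x) := by
    rw [← add_sub_add_right_eq_sub py px qx, hx, ← ha, add_sub_cancel_left]
  have ha0 : a ≠ 0 := by rintro rfl; exact hne (sub_eq_zero.mp (by simpa using hdir)).symm
  obtain ⟨i, j, hij, c, hc⟩ := hGP px py hne
    (isExtreme_segment_of_isExtreme_add_segment hP hE hpx hpy hqx hqy hx hy)
  refine ⟨i, j, hij, a⁻¹ * c, ?_⟩
  rw [mul_smul, ← hc, hdir, smul_smul, inv_mul_cancel₀ ha0, one_smul]

/-- The Minkowski sum of two generalized permutohedra in `ℝⁿ` is a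
generalized permutohedron. -/
theorem minkowski_sum_generalized_permutohedra
    (n : ℕ) (P Q : Set (Fin n → ℝ)) (SP SQ : Finset (Fin n → ℝ))
    (hP : P = convexHull ℝ (SP : Set (Fin n → ℝ)))
    (hQ : Q = convexHull ℝ (SQ : Set (Fin n → ℝ)))
    (hGP : IsGeneralizedPermutohedron n P) (hGQ : IsGeneralizedPermutohedron n Q) :
    IsGeneralizedPermutohedron n (P + Q) := by
  have hPc : Convex ℝ P := hP ▸ convex_convexHull ℝ _
  have hQc : Convex ℝ Q := hQ ▸ convex_convexHull ℝ _
  intro x y hxy hE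
  obtain ⟨px, hpx, qx, hqx, rfl⟩ := hE.subset (left_mem_segment ℝ x y)
  obtain ⟨py, hpy, qy, hqy, rfl⟩ := hE.subset (right_mem_segment ℝ _ y)
  rcases ne_or_eq px py with hne | rfl
  · exact hGP.exists_sub_eq_smul_of_isExtreme_add hPc hE hpx hpy hqx hqy rfl rfl hne
  · have hne : qx ≠ qy := by rintro rfl; exact hxy rfl
    rw [add_comm P Q] at hE
    exact hGQ.exists_sub_eq_smul_of_isExtreme_add hQc hE hqx hqy hpx hpy
      (add_comm _ _) (add_comm _ _) hne
end

section
/- Let f, g ∈ ℝ[x_1, ..., x_n] be nonzero polynomials all of whose coefficients are nonnegative. Then the Newton polytope of the product is the Minkowski sum of the Newton polytopes: N[f·g] = N[f] + N[g]. -/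
open scoped Pointwise

/-
With nonnegative coefficients no cancellation can occur in the product, so the support of `f * g`
is the full Minkowski sum of the supports. The exponent map `ℕ^σ → ℝ^σ` is additive, and taking
convex hulls commutes with Minkowski sums.
-/

namespace MvPolynomial

variable {σ R : Type*} [DecidableEq σ] [CommSemiring R] [PartialOrder R] [IsStrictOrderedRing R]

theorem support_mul_of_nonneg_coeff {f g : MvPolynomial σ R}
    (hf : ∀ d, 0 ≤ f.coeff d) (hg : ∀ d, 0 ≤ g.coeff d) :
    (f * g).support = f.support + g.support := by
  refine (support_mul f g).antisymm ?_
  rintro _ hab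
  obtain ⟨a, ha, b, hb, rfl⟩ := Finset.mem_add.mp hab
  rw [mem_support_iff] at ha hb ⊢
  have hab_pos : 0 < f.coeff a * g.coeff b :=
    mul_pos ((hf a).lt_of_ne' ha) ((hg b).lt_of_ne' hb)
  rw [coeff_mul]
  refine (Finset.sum_pos' (fun x _ => mul_nonneg (hf x.1) (hg x.2)) ⟨(a, b), ?_, hab_pos⟩).ne'
  exact Finset.HasAntidiagonal.mem_antidiagonal.mpr rfl

end MvPolynomial

theorem convexHull_image_add {𝕜 M E : Type*} [Field 𝕜] [LinearOrder 𝕜] [IsStrictOrderedRing 𝕜]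
    [AddCommMonoid M] [AddCommGroup E] [Module 𝕜 E] (φ : M →+ E) (s t : Set M) :
    convexHull 𝕜 (φ '' (s + t)) = convexHull 𝕜 (φ '' s) + convexHull 𝕜 (φ '' t) := by
  rw [Set.image_add, convexHull_add]

theorem newton_polytope_mul_nonneg_coeffs_general
    (n : ℕ) (f g : MvPolynomial (Fin n) ℝ)
    (hfpos : ∀ d, 0 ≤ f.coeff d) (hgpos : ∀ d, 0 ≤ g.coeff d) :
    convexHull ℝ ((fun d : Fin n →₀ ℕ => fun i => (d i : ℝ)) '' ↑(f * g).support) =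
      convexHull ℝ ((fun d : Fin n →₀ ℕ => fun i => (d i : ℝ)) '' ↑f.support) +
        convexHull ℝ ((fun d : Fin n →₀ ℕ => fun i => (d i : ℝ)) '' ↑g.support) := by
  let exponent : (Fin n →₀ ℕ) →+ (Fin n → ℝ) :=
    AddMonoidHom.pi fun i => (Nat.castAddMonoidHom ℝ).comp (Finsupp.applyAddHom i)
  rw [MvPolynomial.support_mul_of_nonneg_coeff hfpos hgpos, Finset.coe_add]
  exact convexHull_image_add exponent _ _

/-- For nonzero polynomials `f, g ∈ ℝ[x₁,…,xₙ]` with nonnegative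
coefficients, the Newton polytope of the product is the Minkowski sum of the Newton
polytopes: `N[f·g] = N[f] + N[g]`. -/
theorem newton_polytope_mul_nonneg_coeffs
    (n : ℕ) (f g : MvPolynomial (Fin n) ℝ) (hf : f ≠ 0) (hg : g ≠ 0)
    (hfpos : ∀ d, 0 ≤ f.coeff d) (hgpos : ∀ d, 0 ≤ g.coeff d) :
    convexHull ℝ ((fun d : Fin n →₀ ℕ => fun i => (d i : ℝ)) '' ↑(f * g).support) =
      convexHull ℝ ((fun d : Fin n →₀ ℕ => fun i => (d i : ℝ)) '' ↑f.support) +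
        convexHull ℝ ((fun d : Fin n →₀ ℕ => fun i => (d i : ℝ)) '' ↑g.support) :=
  newton_polytope_mul_nonneg_coeffs_general n f g hfpos hgpos
end

section
/- Let 1 ≤ k ≤ n and let A = {χ_S : S ⊆ {1,...,n}, |S| = k} ⊆ ℤ^n be the set of vertices of the hypersimplex Δ(k,n). Then A is normal: every element of the subgroup of (ℤ^n,+) generated by A whose image in ℝ^n lies in the convex cone of nonnegative real combinations of A already belongs to the additive submonoid generated by A. -/
/-!
A lattice point `z` of the cone over `Δ(k,n)` satisfies `0 ≤ zᵢ` and `k zᵢ ≤ ∑ⱼ zⱼ`, and lying in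
the lattice of the vertices forces `k ∣ ∑ⱼ zⱼ`. So `z` is a nonnegative integer vector with
entries at most `m` and coordinate sum `k m`. Such a vector is a sum of `m` vertices: choose a
`k`-set `S` containing every coordinate equal to `m` and contained in the support of `z`
(a counting argument shows it exists); then `z - χ_S` has entries at most `m - 1` and sum
`k (m - 1)`, and we induct on `m`.
-/

open Finset

variable {ι : Type*} [Fintype ι]

def hypersimplexVertices (ι : Type*) [DecidableEq ι] (k : ℕ) : Set (ι → ℤ) :=
  {a | ∃ S : Finset ι, S.card = k ∧ a = fun i => if i ∈ S then 1 else 0}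

theorem Submodule.nonneg_of_mem_span_nnreal {E : Type*} [AddCommGroup E] [Module ℝ E]
    (f : E →ₗ[ℝ] ℝ) {s : Set E} (hs : ∀ x ∈ s, 0 ≤ f x) {x : E}
    (hx : x ∈ Submodule.span NNReal s) : 0 ≤ f x := by
  induction hx using Submodule.span_induction with
  | mem x hx => exact hs x hx
  | zero => simp
  | add x y _ _ hx hy => simpa using add_nonneg hx hy
  | smul c x _ hx => simpa [NNReal.smul_def] using mul_nonneg c.2 hx

lemma exists_card_eq_of_sum_eq {k m : ℕ} {z : ι → ℤ} (h0 : ∀ i, 0 ≤ z i)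
    (hm : ∀ i, z i ≤ m + 1) (hsum : ∑ i, z i = k * (m + 1)) :
    ∃ S : Finset ι, S.card = k ∧ (∀ i ∈ S, 1 ≤ z i) ∧ ∀ i ∉ S, z i ≤ m := by
  set T := univ.filter fun i => z i = m + 1
  set P := univ.filter fun i => 1 ≤ z i
  have hTP : T ⊆ P := fun i hi => by
    simp only [T, P, mem_filter, mem_univ, true_and] at hi ⊢; omega
  have hTk : T.card ≤ k := by
    have : (T.card : ℤ) * (m + 1) ≤ k * (m + 1) := calc
      (T.card : ℤ) * (m + 1) = ∑ i ∈ T, z i := by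
        rw [sum_congr rfl fun i hi => (mem_filter.mp hi).2, sum_const, nsmul_eq_mul]
      _ ≤ ∑ i, z i := sum_le_sum_of_subset_of_nonneg (subset_univ T) fun i _ _ => h0 i
      _ = k * (m + 1) := hsum
    exact_mod_cast le_of_mul_le_mul_right this (by positivity)
  have hPk : k ≤ P.card := by
    have : (k : ℤ) * (m + 1) ≤ P.card * (m + 1) := calc
      (k : ℤ) * (m + 1) = ∑ i ∈ P, z i := by
        rw [← hsum]; exact (sum_filter_of_ne fun i _ hi => by have := h0 i; omega).symm
      _ ≤ P.card • ((m : ℤ) + 1) := sum_le_card_nsmul _ _ _ fun i _ => hm i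
      _ = P.card * (m + 1) := nsmul_eq_mul _ _
    exact_mod_cast le_of_mul_le_mul_right this (by positivity)
  obtain ⟨S, hTS, hSP, hS⟩ := exists_subsuperset_card_eq hTP hTk hPk
  refine ⟨S, hS, fun i hi => (mem_filter.mp (hSP hi)).2, fun i hi => ?_⟩
  have : z i ≠ m + 1 := fun h => hi (hTS (by simp [T, h]))
  have := hm i
  omega

theorem mem_closure_hypersimplexVertices_of_le [DecidableEq ι] {k : ℕ} (m : ℕ) {z : ι → ℤ}
    (h0 : ∀ i, 0 ≤ z i) (hm : ∀ i, z i ≤ m) (hsum : ∑ i, z i = k * m) :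
    z ∈ AddSubmonoid.closure (hypersimplexVertices ι k) := by
  induction m generalizing z with
  | zero =>
    obtain rfl : z = 0 := funext fun i => le_antisymm (by simpa using hm i) (h0 i)
    exact zero_mem _
  | succ m ih =>
    obtain ⟨S, hS, hSpos, hSc⟩ :=
      exists_card_eq_of_sum_eq h0 (by simpa using hm) (by simpa using hsum)
    set χ : ι → ℤ := fun i => if i ∈ S then 1 else 0
    have hχ : χ ∈ hypersimplexVertices ι k := ⟨S, hS, rfl⟩
    have hχsum : ∑ i, χ i = k := by simp [χ, hS]
    have hrest : z - χ ∈ AddSubmonoid.closure (hypersimplexVertices ι k) := by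
      refine ih (fun i => ?_) (fun i => ?_) ?_
      · by_cases hi : i ∈ S <;> simp [χ, hi, hSpos, h0]
      · by_cases hi : i ∈ S
        · have := hm i
          push_cast at this
          simp only [χ, Pi.sub_apply, hi, ↓reduceIte]
          omega
        · simpa [χ, hi] using hSc i hi
      · simp only [Pi.sub_apply, sum_sub_distrib, hχsum, hsum]
        push_cast
        ring
    simpa using add_mem hrest (AddSubmonoid.subset_closure hχ)

lemma dvd_sum_of_mem_closure_hypersimplexVertices [DecidableEq ι] {k : ℕ} {z : ι → ℤ}
    (hz : z ∈ AddSubgroup.closure (hypersimplexVertices ι k)) : (k : ℤ) ∣ ∑ i, z i := by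
  induction hz using AddSubgroup.closure_induction with
  | mem a ha => obtain ⟨S, hS, rfl⟩ := ha; simp [hS]
  | zero => simp
  | add a b _ _ ha hb => simpa [sum_add_distrib] using dvd_add ha hb
  | neg a _ ha => simpa using ha

lemma le_sum_of_mem_span_hypersimplexVertices [DecidableEq ι] {k : ℕ} {x : ι → ℝ}
    (hx : x ∈ Submodule.span NNReal
      ((fun a : ι → ℤ => fun i => (a i : ℝ)) '' hypersimplexVertices ι k)) (i : ι) :
    0 ≤ x i ∧ k * x i ≤ ∑ j, x j := by
  constructor
  · refine Submodule.nonneg_of_mem_span_nnreal (LinearMap.proj i) ?_ hx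
    rintro _ ⟨_, ⟨S, -, rfl⟩, rfl⟩
    by_cases hi : i ∈ S <;> simp [hi]
  · have := Submodule.nonneg_of_mem_span_nnreal
      (∑ j, LinearMap.proj j - (k : ℝ) • LinearMap.proj (R := ℝ) (φ := fun _ : ι => ℝ) i) ?_ hx
    · simpa using this
    rintro _ ⟨_, ⟨S, hS, rfl⟩, rfl⟩
    by_cases hi : i ∈ S <;> simp [hi, hS]

theorem hypersimplex_vertices_normal_general
    (n k : ℕ) (hk1 : 1 ≤ k)
    (A : Set (Fin n → ℤ))
    (hA : A = {a : Fin n → ℤ |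
      ∃ S : Finset (Fin n), S.card = k ∧ a = fun i => if i ∈ S then 1 else 0})
    (z : Fin n → ℤ) (hz : z ∈ AddSubgroup.closure A)
    (hcone : (fun i => (z i : ℝ)) ∈
      Submodule.span NNReal ((fun a : Fin n → ℤ => fun i => (a i : ℝ)) '' A)) :
    z ∈ AddSubmonoid.closure A := by
  change A = hypersimplexVertices (Fin n) k at hA
  subst hA
  obtain ⟨m, hm⟩ := dvd_sum_of_mem_closure_hypersimplexVertices hz
  have hineq := le_sum_of_mem_span_hypersimplexVertices hcone
  have h0 : ∀ i, 0 ≤ z i := fun i => by exact_mod_cast (hineq i).1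
  have hkz : ∀ i, k * z i ≤ k * m := fun i => hm ▸ by exact_mod_cast (hineq i).2
  have hk : (0 : ℤ) < k := by exact_mod_cast hk1
  lift m to ℕ using nonneg_of_mul_nonneg_right (hm ▸ sum_nonneg fun i _ => h0 i) hk
  exact mem_closure_hypersimplexVertices_of_le m h0
    (fun i => le_of_mul_le_mul_left (hkz i) hk) hm

/-- The vertex set `A = {χ_S : |S| = k} ⊆ ℤⁿ` of the hypersimplex
`Δ(k,n)` is normal: every element of the subgroup of `(ℤⁿ,+)` generated by `A` whose
image in `ℝⁿ` lies in the cone of nonnegative real combinations of `A` already belongs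
to the additive submonoid generated by `A`. -/
theorem hypersimplex_vertices_normal
    (n k : ℕ) (hk1 : 1 ≤ k) (hkn : k ≤ n)
    (A : Set (Fin n → ℤ))
    (hA : A = {a : Fin n → ℤ |
      ∃ S : Finset (Fin n), S.card = k ∧ a = fun i => if i ∈ S then 1 else 0})
    (z : Fin n → ℤ) (hz : z ∈ AddSubgroup.closure A)
    (hcone : (fun i => (z i : ℝ)) ∈
      Submodule.span NNReal ((fun a : Fin n → ℤ => fun i => (a i : ℝ)) '' A)) :
    z ∈ AddSubmonoid.closure A :=
  hypersimplex_vertices_normal_general n k hk1 A hA z hz hcone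
end
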